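/- arXiv:1701.02614 — 5 statements merged into one kernel-verified Lean document; each statement's English description precedes it below -/
import Mathlib

section
/- In the class of connected graphs of bounded degree, the property of having polynomial containment of degree at most d is a quasi-isometry invariant: if G and G' are connected graphs of bounded degree (equipped with their combinatorial metrics) that are quasi-isometric, and G has polynomial containment of degree at most d, then G' has polynomial containment of degree at most d. -/
universe u

/-- A map between the vertex sets of two graphs (each vertex set carrying the combinatorial
metric `SimpleGraph.dist`) is a quasi-isometry. -/
def GraphQuasiIsometry {V : Type*} {V' : Type*} (G : SimpleGraph V) (G' : SimpleGraph V')
    (f : V → V') : Prop :=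
  ∃ lam ε K : ℝ, 1 ≤ lam ∧ 0 ≤ ε ∧ 0 ≤ K ∧
    (∀ x y : V,
      lam⁻¹ * (G.dist x y : ℝ) - ε ≤ (G'.dist (f x) (f y) : ℝ) ∧
      (G'.dist (f x) (f y) : ℝ) ≤ lam * (G.dist x y : ℝ) + ε) ∧
    (∀ v' : V', ∃ x : V, (G'.dist v' (f x) : ℝ) ≤ K)

/-- Two graphs are quasi-isometric (with their combinatorial metrics). -/
def QuasiIsometric {V V' : Type*} (G : SimpleGraph V) (G' : SimpleGraph V') : Prop :=
  ∃ f : V → V', GraphQuasiIsometry G G' f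

/-- `G` has polynomial containment of degree at most `d`. -/
def HasPolyContainment {V : Type*} (G : SimpleGraph V) (d : ℕ) : Prop :=
  ∃ C : ℝ, 0 < C ∧
    ∀ X₀ : Set V, X₀.Finite →
      ∃ (W : ℕ → Set V) (X : ℕ → Set V),
        X 0 = X₀ ∧
        (∀ n : ℕ, 1 ≤ n → (W n).Finite ∧ ((W n).ncard : ℝ) ≤ C * (n : ℝ) ^ d) ∧
        (∀ n : ℕ, X (n + 1) =
          {v : V | ∃ u ∈ X n, v = u ∨ G.Adj u v} \ (⋃ k ∈ Finset.Icc 1 (n + 1), W k)) ∧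
        (∀ n : ℕ, Disjoint (X n) (W (n + 1))) ∧
        (∃ T : ℕ, 0 < T ∧ ∀ n : ℕ, T ≤ n → X n = X T)

/-- `G` has all vertex degrees bounded above by some `D`. -/
def BoundedDegree {V : Type*} (G : SimpleGraph V) : Prop :=
  ∃ D : ℕ, ∀ v : V, (G.neighborSet v).Finite ∧ (G.neighborSet v).ncard ≤ D

/-- Number of vertices at distance at most `n` from the base vertex `g₀`. -/
noncomputable def growthFunction {V : Type*} (G : SimpleGraph V) (g₀ : V) (n : ℕ) : ℕ :=
  {v : V | G.dist g₀ v ≤ n}.ncard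

/-- Edges of `G` with exactly one endpoint in `K`. -/
def edgeBoundary {V : Type*} (G : SimpleGraph V) (K : Set V) : Set (Sym2 V) :=
  {e ∈ G.edgeSet | ∃ u v : V, e = s(u, v) ∧ u ∈ K ∧ v ∉ K}

/-- Cheeger constant of a graph. -/
noncomputable def cheegerConstant {V : Type*} (G : SimpleGraph V) : ℝ :=
  sInf {r : ℝ | ∃ K : Set V, K.Finite ∧ K.Nonempty ∧
    r = ((edgeBoundary G K).ncard : ℝ) / (K.ncard : ℝ)}

/-- Cayley graph of a group with respect to a set `S`. -/
def cayleyGraph (Γ : Type*) [Group Γ] (S : Set Γ) : SimpleGraph Γ :=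
  SimpleGraph.fromRel (fun g h => ∃ s ∈ S, h = g * s)

/-- Word length of `g` with respect to `S`. -/
noncomputable def wordLength {Γ : Type*} [Group Γ] (S : Set Γ) (g : Γ) : ℕ :=
  sInf {n : ℕ | ∃ l : List Γ, l.length = n ∧ (∀ x ∈ l, x ∈ S ∪ S⁻¹) ∧ l.prod = g}

def VirtuallyNilpotent (Γ : Type*) [Group Γ] : Prop :=
  ∃ H : Subgroup Γ, H.FiniteIndex ∧ Group.IsNilpotent H

/-- The infinite `δ`-regular tree. -/
def IsRegularTree {U : Type*} (T : SimpleGraph U) (δ : ℕ) : Prop :=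
  Infinite U ∧ T.IsTree ∧ ∀ v : U, (T.neighborSet v).Finite ∧ (T.neighborSet v).ncard = δ

/-- `a` and `b` generate a free semigroup of rank two. -/
def GeneratesFreeSemigroup {Γ : Type*} [Group Γ] (a b : Γ) : Prop :=
  Function.Injective
    (FreeSemigroup.lift (fun x : Bool => if x then a else b) : FreeSemigroup Bool →ₙ* Γ)

/-- Elementary amenable groups: the smallest class containing finite and abelian groups and
closed under subgroups, quotients, extensions and directed unions. -/
inductive ElementaryAmenable : (G : Type u) → [inst : Group G] → Prop
  | finite (G : Type u) [Group G] [Finite G] : ElementaryAmenable G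
  | abelian (G : Type u) [Group G] (h : ∀ a b : G, a * b = b * a) : ElementaryAmenable G
  | subgroup {G H : Type u} [Group G] [Group H] (f : H →* G) (hf : Function.Injective f)
      (hG : ElementaryAmenable G) : ElementaryAmenable H
  | quotient {G H : Type u} [Group G] [Group H] (f : G →* H) (hf : Function.Surjective f)
      (hG : ElementaryAmenable G) : ElementaryAmenable H
  | extension {G : Type u} [Group G] (N : Subgroup G) [N.Normal]
      (hN : ElementaryAmenable N) (hQ : ElementaryAmenable (G ⧸ N)) : ElementaryAmenable G
  | directedUnion {G : Type u} [Group G] {ι : Type u} (H : ι → Subgroup G)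
      (hdir : ∀ i j, ∃ k, H i ≤ H k ∧ H j ≤ H k)
      (hunion : ∀ g : G, ∃ i, g ∈ H i)
      (hEA : ∀ i, ElementaryAmenable (H i)) : ElementaryAmenable G

/-!
Pull the fire back along a quasi-inverse `g` of `f`, with `f (g y)` within `K` of `y`, and push
the defence forward along `f`. Light the fire of `G` at `g '' X₀`. Adjacent vertices of `G'` near
the `G`-fire have `g`-images at distance at most `M`, so one step of the `G'`-fire corresponds to
at most `M` steps of the `G`-fire. Accordingly `G'` defends at time `n + 1` everything within
`K + L` of the `f`-image of what `G` defends during the times `(M n, M (n + 1)]`, where `f` maps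
`M`-close points `L`-close; by bounded degree this is `O(n ^ d)` vertices. By induction the
`G'`-fire at time `n` stays within `K` of the `f`-image of the `G`-fire at time `M n`: a
`G`-geodesic from the old fire to `g y` either meets a defended vertex, and then `y` is defended
unless it is already that close to the fire, or it burns entirely. Hence the `G'`-fire stays
inside a neighbourhood of the image of the finite `G`-fire.
-/

lemma Set.encard_biUnion_le_encard_mul {ι α : Type*} {A : Set ι} {s : ι → Set α} {c : ℕ∞}
    (hs : ∀ a ∈ A, (s a).encard ≤ c) : (⋃ a ∈ A, s a).encard ≤ A.encard * c := by
  rcases A.finite_or_infinite with hA | hA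
  · have hunion : (⋃ a ∈ A, s a) = ⋃ a ∈ hA.toFinset, s a := by simp
    calc (⋃ a ∈ A, s a).encard ≤ ∑ a ∈ hA.toFinset, (s a).encard := by
          rw [hunion]; exact Finset.set_encard_biUnion_le _ _
      _ ≤ ∑ _a ∈ hA.toFinset, c := Finset.sum_le_sum fun a ha => hs a (by simpa using ha)
      _ = A.encard * c := by rw [Finset.sum_const, nsmul_eq_mul, hA.encard_eq_coe_toFinset_card]
  · rcases eq_or_ne c 0 with rfl | hc
    · simp_all
    · simp [hA.encard_eq, hc]

lemma Set.exists_forall_ge_eq_of_monotone {α : Type*} {X : ℕ → Set α} (hX : Monotone X)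
    (hfin : (⋃ n, X n).Finite) : ∃ T, 0 < T ∧ ∀ n, T ≤ n → X n = X T := by
  have hrange : (X '' Set.univ).Finite :=
    hfin.finite_subsets.subset (by rintro _ ⟨n, -, rfl⟩; exact Set.subset_iUnion X n)
  obtain ⟨T, -, hT⟩ := Set.Finite.exists_maximalFor' X Set.univ hrange Set.univ_nonempty
  have hstable : ∀ n, T ≤ n → X n = X T := fun n hn =>
    (hT trivial (hX hn)).antisymm (hX hn)
  exact ⟨T + 1, T.succ_pos, fun n hn => by rw [hstable n (by omega), hstable (T + 1) (by omega)]⟩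

lemma Nat.exists_mul_lt_le_mul_succ {M k : ℕ} (hM : 0 < M) (hk : 1 ≤ k) :
    ∃ q, M * q < k ∧ k ≤ M * (q + 1) := by
  refine ⟨(k - 1) / M, ?_, ?_⟩
  · have := Nat.mul_div_le (k - 1) M
    omega
  · have := Nat.lt_mul_div_succ (k - 1) hM
    omega

-- `M + 1` rather than `M` keeps the resulting constant positive when `M = 0`.
lemma sum_ncard_Ioc_le {α : Type*} {W : ℕ → Set α} {C : ℝ} (hC : 0 ≤ C) {d : ℕ}
    (hW : ∀ n, 1 ≤ n → ((W n).ncard : ℝ) ≤ C * n ^ d) (M n : ℕ) :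
    ∑ i ∈ Finset.Ioc (M * n) (M * (n + 1)), ((W i).ncard : ℝ) ≤
      C * (M + 1) ^ (d + 1) * (n + 1) ^ d := by
  have hterm : ∀ i ∈ Finset.Ioc (M * n) (M * (n + 1)),
      ((W i).ncard : ℝ) ≤ C * ((M : ℝ) * (n + 1)) ^ d := fun i hi => by
    obtain ⟨hi1, hi2⟩ := Finset.mem_Ioc.1 hi
    refine (hW i (by omega)).trans ?_
    gcongr
    exact_mod_cast hi2
  have hcard : (Finset.Ioc (M * n) (M * (n + 1))).card = M := by
    rw [Nat.card_Ioc, Nat.mul_succ, Nat.add_sub_cancel_left]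
  calc ∑ i ∈ Finset.Ioc (M * n) (M * (n + 1)), ((W i).ncard : ℝ)
      ≤ M * (C * ((M : ℝ) * (n + 1)) ^ d) := by
        simpa [hcard] using Finset.sum_le_card_nsmul _ _ _ hterm
    _ ≤ (M + 1) * (C * (((M : ℝ) + 1) * (n + 1)) ^ d) := by gcongr <;> linarith
    _ = C * (M + 1) ^ (d + 1) * (n + 1) ^ d := by rw [mul_pow]; ring

namespace SimpleGraph

section Metric

variable {V : Type*} (G : SimpleGraph V)

def closedNbhd (A : Set V) : Set V := {v | ∃ u ∈ A, v = u ∨ G.Adj u v}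

def closedBall (y : V) (r : ℕ) : Set V := {v | G.dist y v ≤ r}

def cthickening (r : ℕ) (A : Set V) : Set V := {v | ∃ a ∈ A, G.dist a v ≤ r}

variable {G}

lemma subset_closedNbhd (A : Set V) : A ⊆ G.closedNbhd A := fun v hv => ⟨v, hv, .inl rfl⟩

lemma closedNbhd_eq_biUnion (A : Set V) :
    G.closedNbhd A = ⋃ u ∈ A, insert u (G.neighborSet u) := by
  ext v
  simp [closedNbhd]

lemma closedNbhd_finite {A : Set V} (hA : A.Finite) (hG : ∀ v, (G.neighborSet v).Finite) :
    (G.closedNbhd A).Finite := by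
  rw [closedNbhd_eq_biUnion]
  exact hA.biUnion fun u _ => (hG u).insert u

lemma encard_closedNbhd_le {D : ℕ} (hD : ∀ v, (G.neighborSet v).encard ≤ D) (A : Set V) :
    (G.closedNbhd A).encard ≤ A.encard * (D + 1) := by
  rw [closedNbhd_eq_biUnion]
  exact Set.encard_biUnion_le_encard_mul fun u _ =>
    (Set.encard_insert_le _ u).trans (by gcongr; exact hD u)

lemma closedBall_zero (hG : G.Preconnected) (y : V) : G.closedBall y 0 = {y} := by
  ext v
  rw [Set.mem_singleton_iff, eq_comm]
  exact Nat.le_zero.trans (hG y v).dist_eq_zero_iff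

lemma closedBall_succ_subset (y : V) (r : ℕ) :
    G.closedBall y (r + 1) ⊆ G.closedNbhd (G.closedBall y r) := by
  intro v hv
  by_cases hvr : G.dist y v ≤ r
  · exact subset_closedNbhd _ hvr
  obtain ⟨p, hp⟩ := exists_walk_of_dist_ne_zero (show G.dist y v ≠ 0 by omega)
  have hlen : p.length = r + 1 := by simp only [closedBall, Set.mem_ofPred_eq] at hv; omega
  refine ⟨p.getVert r, (dist_le (p.take r)).trans (by simp [Walk.take_length]), .inr ?_⟩
  simpa [← hlen] using p.adj_getVert_succ (i := r) (by omega)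

lemma encard_closedBall_le (hG : G.Preconnected) {D : ℕ}
    (hD : ∀ v, (G.neighborSet v).encard ≤ D) (y : V) (r : ℕ) :
    (G.closedBall y r).encard ≤ ((D : ℕ∞) + 1) ^ r := by
  induction r with
  | zero => simp [closedBall_zero hG]
  | succ r ih =>
    calc (G.closedBall y (r + 1)).encard
        ≤ (G.closedNbhd (G.closedBall y r)).encard :=
          Set.encard_le_encard (closedBall_succ_subset y r)
      _ ≤ (G.closedBall y r).encard * (D + 1) := encard_closedNbhd_le hD _
      _ ≤ ((D : ℕ∞) + 1) ^ r * (D + 1) := by gcongr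
      _ = ((D : ℕ∞) + 1) ^ (r + 1) := (pow_succ _ _).symm

lemma cthickening_mono (r : ℕ) : Monotone (G.cthickening r) :=
  fun _ _ hAB _ ⟨a, ha, hav⟩ => ⟨a, hAB ha, hav⟩

lemma encard_cthickening_le (hG : G.Preconnected) {D : ℕ}
    (hD : ∀ v, (G.neighborSet v).encard ≤ D) (r : ℕ) (A : Set V) :
    (G.cthickening r A).encard ≤ A.encard * ((D : ℕ∞) + 1) ^ r := by
  have hA : G.cthickening r A = ⋃ a ∈ A, G.closedBall a r := by
    ext
    simp [cthickening, closedBall]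
  rw [hA]
  exact Set.encard_biUnion_le_encard_mul fun a _ => encard_closedBall_le hG hD a r

lemma cthickening_finite (hG : G.Preconnected) {D : ℕ}
    (hD : ∀ v, (G.neighborSet v).encard ≤ D) (r : ℕ) {A : Set V} (hA : A.Finite) :
    (G.cthickening r A).Finite := by
  refine Set.encard_lt_top_iff.1 ((encard_cthickening_le hG hD r A).trans_lt ?_)
  rw [← hA.cast_ncard_eq]
  exact_mod_cast ENat.natCast_lt_top _

end Metric

section Spread

variable {V : Type*} (G : SimpleGraph V)

-- The sets `X_n` of the definition of polynomial containment, determined by `X₀` and `W`.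
def spread (X₀ : Set V) (W : ℕ → Set V) : ℕ → Set V
  | 0 => X₀
  | n + 1 => G.closedNbhd (spread X₀ W n) \ ⋃ k ∈ Finset.Icc 1 (n + 1), W k

structure IsPolyContainment (C : ℝ) (d : ℕ) (X₀ : Set V) (W : ℕ → Set V) : Prop where
  card_le : ∀ n, 1 ≤ n → (W n).Finite ∧ ((W n).ncard : ℝ) ≤ C * n ^ d
  disjoint : ∀ n, Disjoint (G.spread X₀ W n) (W (n + 1))
  finite_iUnion : (⋃ n, G.spread X₀ W n).Finite

variable {G} {X₀ : Set V} {W : ℕ → Set V}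

lemma spread_succ (n : ℕ) :
    G.spread X₀ W (n + 1) = G.closedNbhd (G.spread X₀ W n) \ ⋃ k ∈ Finset.Icc 1 (n + 1), W k :=
  rfl

lemma eq_spread {X : ℕ → Set V}
    (hX : ∀ n, X (n + 1) = G.closedNbhd (X n) \ ⋃ k ∈ Finset.Icc 1 (n + 1), W k) :
    X = G.spread (X 0) W := by
  funext n
  induction n with
  | zero => rfl
  | succ n ih => rw [hX, ih, spread_succ]

lemma notMem_of_mem_spread (hdisj : ∀ n, Disjoint (G.spread X₀ W n) (W (n + 1))) {n k : ℕ}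
    {v : V} (hv : v ∈ G.spread X₀ W n) (hk : k ∈ Finset.Icc 1 (n + 1)) : v ∉ W k := by
  obtain ⟨hk1, hkn⟩ := Finset.mem_Icc.1 hk
  rcases hkn.lt_or_eq with hlt | rfl
  · obtain ⟨m, rfl⟩ : ∃ m, n = m + 1 := ⟨n - 1, by omega⟩
    exact fun hvk => hv.2 (Set.mem_biUnion (Finset.mem_Icc.2 ⟨hk1, by omega⟩) hvk)
  · exact Set.disjoint_left.1 (hdisj n) hv

lemma spread_monotone (hdisj : ∀ n, Disjoint (G.spread X₀ W n) (W (n + 1))) :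
    Monotone (G.spread X₀ W) :=
  monotone_nat_of_le_succ fun n v hv => ⟨subset_closedNbhd _ hv, fun hvW => by
    obtain ⟨k, hk, hvk⟩ := Set.mem_iUnion₂.1 hvW
    exact notMem_of_mem_spread hdisj hv hk hvk⟩

lemma spread_finite (hG : ∀ v, (G.neighborSet v).Finite) (hX₀ : X₀.Finite) (n : ℕ) :
    (G.spread X₀ W n).Finite := by
  induction n with
  | zero => exact hX₀
  | succ n ih => exact (closedNbhd_finite ih hG).sdiff

lemma mem_spread_of_walk {x y : V} (w : G.Walk x y) {n : ℕ} (hx : x ∈ G.spread X₀ W n)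
    (hw : ∀ z ∈ w.support.tail, ∀ k ∈ Finset.Icc 1 (n + w.length), z ∉ W k) :
    y ∈ G.spread X₀ W (n + w.length) := by
  induction w generalizing n with
  | nil => exact hx
  | @cons x z y hxz p ih =>
    have hz : z ∈ G.spread X₀ W (n + 1) := by
      refine ⟨⟨x, hx, .inr hxz⟩, fun hzW => ?_⟩
      obtain ⟨k, hk, hzk⟩ := Set.mem_iUnion₂.1 hzW
      refine hw z (by simp) k ?_ hzk
      simp only [Finset.mem_Icc, Walk.length_cons] at hk ⊢
      omega
    have hp := ih hz fun u hu k hk => hw u (by simpa using List.mem_of_mem_tail hu) k (by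
      simp only [Finset.mem_Icc, Walk.length_cons] at hk ⊢
      omega)
    rwa [Walk.length_cons, ← add_assoc, add_right_comm]

end Spread

section Transfer

variable {V V' : Type*} {G : SimpleGraph V} {G' : SimpleGraph V'}

-- The subtracted set contains the target fire at time `n` (`spread_transferDefence_subset`),
-- which keeps the defence disjoint from the fire.
def transferDefence (G' : SimpleGraph V') (f : V → V') (K M R : ℕ) (W X : ℕ → Set V) :
    ℕ → Set V'
  | 0 => ∅
  | n + 1 => G'.cthickening R (f '' ⋃ i ∈ Finset.Ioc (M * n) (M * (n + 1)), W i) \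
      G'.cthickening K (f '' X (M * n))

lemma encard_transferDefence_le (hG' : G'.Preconnected) {D : ℕ}
    (hD : ∀ v, (G'.neighborSet v).encard ≤ D) (f : V → V') (K M R : ℕ) (W X : ℕ → Set V)
    (n : ℕ) : (transferDefence G' f K M R W X (n + 1)).encard ≤
      (∑ i ∈ Finset.Ioc (M * n) (M * (n + 1)), (W i).encard) * ((D : ℕ∞) + 1) ^ R :=
  calc (transferDefence G' f K M R W X (n + 1)).encard
      ≤ (G'.cthickening R (f '' ⋃ i ∈ Finset.Ioc (M * n) (M * (n + 1)), W i)).encard :=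
        Set.encard_le_encard Set.sdiff_subset
    _ ≤ (f '' ⋃ i ∈ Finset.Ioc (M * n) (M * (n + 1)), W i).encard * ((D : ℕ∞) + 1) ^ R :=
        encard_cthickening_le hG' hD R _
    _ ≤ _ := by
        gcongr
        exact (Set.encard_image_le _ _).trans (Finset.set_encard_biUnion_le _ _)

lemma transferDefence_card_le (hG' : G'.Preconnected) {D : ℕ}
    (hD : ∀ v, (G'.neighborSet v).encard ≤ D) {f : V → V'} {W : ℕ → Set V} {C : ℝ} (hC : 0 ≤ C)
    {d M : ℕ} (hW : ∀ n, 1 ≤ n → (W n).Finite ∧ ((W n).ncard : ℝ) ≤ C * n ^ d) (K R : ℕ)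
    (X : ℕ → Set V) (n : ℕ) (hn : 1 ≤ n) :
    (transferDefence G' f K M R W X n).Finite ∧
      ((transferDefence G' f K M R W X n).ncard : ℝ) ≤
        C * (M + 1) ^ (d + 1) * (D + 1) ^ R * n ^ d := by
  obtain ⟨m, rfl⟩ : ∃ m, n = m + 1 := ⟨n - 1, by omega⟩
  have hN : (transferDefence G' f K M R W X (m + 1)).encard ≤
      ((∑ i ∈ Finset.Ioc (M * m) (M * (m + 1)), (W i).ncard) * (D + 1) ^ R : ℕ) := by
    refine (encard_transferDefence_le hG' hD f K M R W X m).trans_eq ?_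
    push_cast
    congr 1
    refine Finset.sum_congr rfl fun i hi => (hW i ?_).1.cast_ncard_eq.symm
    have := (Finset.mem_Ioc.1 hi).1
    omega
  obtain ⟨hfin, hcard⟩ := Set.encard_le_coe_iff_finite_ncard_le.1 hN
  refine ⟨hfin, ?_⟩
  calc ((transferDefence G' f K M R W X (m + 1)).ncard : ℝ)
      ≤ (∑ i ∈ Finset.Ioc (M * m) (M * (m + 1)), ((W i).ncard : ℝ)) * ((D : ℝ) + 1) ^ R := by
        exact_mod_cast hcard
    _ ≤ C * (M + 1) ^ (d + 1) * (m + 1) ^ d * ((D : ℝ) + 1) ^ R := by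
        gcongr
        exact sum_ncard_Ioc_le hC (fun n hn => (hW n hn).2) M m
    _ = C * (M + 1) ^ (d + 1) * (D + 1) ^ R * ((m + 1 : ℕ) : ℝ) ^ d := by push_cast; ring

variable {f : V → V'} {g : V' → V} {K M L : ℕ} {X₀ : Set V} {W : ℕ → Set V}

lemma mem_cthickening_of_adj (hG : G.Preconnected) (hG' : G'.Preconnected)
    (hX : Monotone (G.spread X₀ W)) (hg : ∀ y, G'.dist (f (g y)) y ≤ K)
    (hM : ∀ x x', G'.dist (f x) (f x') ≤ 2 * K + 1 → G.dist x x' ≤ M)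
    (hL : ∀ x x', G.dist x x' ≤ M → G'.dist (f x) (f x') ≤ L) {n : ℕ} {u y : V'}
    (hu : u ∈ G'.cthickening K (f '' G.spread X₀ W (M * n))) (huy : y = u ∨ G'.Adj u y)
    (hy : ∀ q ≤ n, y ∉ transferDefence G' f K M (K + L) W (G.spread X₀ W) (q + 1)) :
    y ∈ G'.cthickening K (f '' G.spread X₀ W (M * (n + 1))) := by
  classical
  obtain ⟨_, ⟨x, hx, rfl⟩, hxu⟩ := hu
  have huy1 : G'.dist u y ≤ 1 := by
    rcases huy with rfl | h
    · simp
    · exact (dist_eq_one_iff_adj.2 h).le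
  have hxy : G'.dist (f x) (f (g y)) ≤ 2 * K + 1 := by
    have h₁ := (hG' (f x) u).dist_triangle_left (f (g y))
    have h₂ := (hG' u y).dist_triangle_left (f (g y))
    have h₃ := hg y
    rw [dist_comm] at h₃
    omega
  obtain ⟨w, hw⟩ := (hG x (g y)).exists_walk_length_eq_dist
  have hwM : w.length ≤ M := hw ▸ hM _ _ hxy
  -- Either the geodesic from `x` to `g y` meets a vertex defended up to time `M (n + 1)`,
  -- or it burns entirely.
  by_cases hdef : ∃ z ∈ w.support.tail, ∃ k ∈ Finset.Icc 1 (M * (n + 1)), z ∈ W k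
  · obtain ⟨z, hz, k, hk, hzk⟩ := hdef
    obtain ⟨hk1, hkn⟩ := Finset.mem_Icc.1 hk
    have hM0 : 0 < M := Nat.pos_of_ne_zero (by rintro rfl; omega)
    obtain ⟨q, hqk, hkq⟩ := Nat.exists_mul_lt_le_mul_succ hM0 hk1
    have hqn : q ≤ n := Nat.lt_succ_iff.1 (Nat.lt_of_mul_lt_mul_left (hqk.trans_le hkn))
    have hzy : G'.dist (f z) y ≤ K + L := by
      have hzg : G.dist z (g y) ≤ M :=
        ((dist_le _).trans (w.length_dropUntil_le_length (List.mem_of_mem_tail hz))).trans hwM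
      have := (hG' (f z) (f (g y))).dist_triangle_left y
      have := hL _ _ hzg
      have := hg y
      omega
    have hyS : y ∈ G'.cthickening K (f '' G.spread X₀ W (M * q)) := by
      by_contra hyS
      refine hy q hqn ⟨⟨f z, ⟨z, ?_, rfl⟩, hzy⟩, hyS⟩
      exact Set.mem_biUnion (Finset.mem_Ioc.2 ⟨hqk, hkq⟩) hzk
    exact cthickening_mono K (Set.image_mono (hX (Nat.mul_le_mul_left M (by omega)))) hyS
  · push Not at hdef
    have hle : M * n + w.length ≤ M * (n + 1) := by rw [Nat.mul_succ]; omega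
    have hgy := mem_spread_of_walk w hx fun z hz k hk =>
      hdef z hz k (Finset.Icc_subset_Icc_right hle hk)
    exact ⟨f (g y), ⟨g y, hX hle hgy, rfl⟩, hg y⟩

lemma spread_transferDefence_subset (hG : G.Preconnected) (hG' : G'.Preconnected)
    {X₀' : Set V'} (hX : Monotone (G.spread (g '' X₀') W)) (hg : ∀ y, G'.dist (f (g y)) y ≤ K)
    (hM : ∀ x x', G'.dist (f x) (f x') ≤ 2 * K + 1 → G.dist x x' ≤ M)
    (hL : ∀ x x', G.dist x x' ≤ M → G'.dist (f x) (f x') ≤ L) (n : ℕ) :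
    G'.spread X₀' (transferDefence G' f K M (K + L) W (G.spread (g '' X₀') W)) n ⊆
      G'.cthickening K (f '' G.spread (g '' X₀') W (M * n)) := by
  induction n with
  | zero => exact fun y hy => ⟨f (g y), ⟨g y, ⟨y, hy, rfl⟩, rfl⟩, hg y⟩
  | succ n ih =>
    rintro y ⟨⟨u, hu, huy⟩, hy⟩
    refine mem_cthickening_of_adj hG hG' hX hg hM hL (ih hu) huy fun q hq hyq => hy ?_
    exact Set.mem_biUnion (Finset.mem_Icc.2 ⟨by omega, by omega⟩) hyq

end Transfer

end SimpleGraph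

open SimpleGraph in
lemma hasPolyContainment_iff {V : Type*} {G : SimpleGraph V}
    (hG : ∀ v, (G.neighborSet v).Finite) {d : ℕ} :
    HasPolyContainment G d ↔
      ∃ C : ℝ, 0 < C ∧ ∀ X₀ : Set V, X₀.Finite → ∃ W, G.IsPolyContainment C d X₀ W := by
  refine exists_congr fun C => and_congr_right fun _ => forall₂_congr fun X₀ hX₀ => ?_
  constructor
  · rintro ⟨W, X, hX0, hcard, hrec, hdisj, T, -, hT⟩
    rw [eq_spread hrec, hX0] at hdisj hT
    have hsub : (⋃ n, G.spread X₀ W n) ⊆ G.spread X₀ W T := Set.iUnion_subset fun n =>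
      (le_total n T).elim (fun hn => spread_monotone hdisj hn) fun hn => (hT n hn).le
    exact ⟨W, hcard, hdisj, (spread_finite hG hX₀ T).subset hsub⟩
  · rintro ⟨W, hcard, hdisj, hfin⟩
    obtain ⟨T, hT, hstable⟩ := Set.exists_forall_ge_eq_of_monotone (spread_monotone hdisj) hfin
    exact ⟨W, G.spread X₀ W, rfl, hcard, fun n => rfl, hdisj, T, hT, hstable⟩

namespace GraphQuasiIsometry

variable {V V' : Type*} {G : SimpleGraph V} {G' : SimpleGraph V'} {f : V → V'}

lemma exists_dist_le_of_dist_map_le (hf : GraphQuasiIsometry G G' f) (r : ℕ) :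
    ∃ s : ℕ, ∀ x x', G'.dist (f x) (f x') ≤ r → G.dist x x' ≤ s := by
  obtain ⟨lam, ε, -, hlam, -, -, hf, -⟩ := hf
  refine ⟨⌈lam * (r + ε)⌉₊, fun x x' hxx' => ?_⟩
  have hlower : lam⁻¹ * (G.dist x x' : ℝ) ≤ r + ε := by
    have := (hf x x').1
    have : (G'.dist (f x) (f x') : ℝ) ≤ r := by exact_mod_cast hxx'
    linarith
  rw [inv_mul_le_iff₀ (by linarith)] at hlower
  exact_mod_cast hlower.trans (Nat.le_ceil _)

lemma exists_dist_map_le_of_dist_le (hf : GraphQuasiIsometry G G' f) (r : ℕ) :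
    ∃ s : ℕ, ∀ x x', G.dist x x' ≤ r → G'.dist (f x) (f x') ≤ s := by
  obtain ⟨lam, ε, -, hlam, -, -, hf, -⟩ := hf
  refine ⟨⌈lam * r + ε⌉₊, fun x x' hxx' => ?_⟩
  have hupper : (G'.dist (f x) (f x') : ℝ) ≤ lam * r + ε := by
    have := (hf x x').2
    have : (G.dist x x' : ℝ) ≤ r := by exact_mod_cast hxx'
    nlinarith
  exact_mod_cast hupper.trans (Nat.le_ceil _)

lemma exists_quasiInverse (hf : GraphQuasiIsometry G G' f) :
    ∃ (K : ℕ) (g : V' → V), ∀ y, G'.dist (f (g y)) y ≤ K := by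
  obtain ⟨-, -, K, -, -, -, -, hdense⟩ := hf
  choose g hg using hdense
  refine ⟨⌈K⌉₊, g, fun y => ?_⟩
  rw [SimpleGraph.dist_comm]
  exact_mod_cast (hg y).trans (Nat.le_ceil _)

end GraphQuasiIsometry

lemma BoundedDegree.exists_encard_neighborSet_le {V : Type*} {G : SimpleGraph V}
    (hG : BoundedDegree G) : ∃ D : ℕ, ∀ v, (G.neighborSet v).encard ≤ D := by
  obtain ⟨D, hD⟩ := hG
  exact ⟨D, fun v => Set.encard_le_coe_iff_finite_ncard_le.2 (hD v)⟩

open SimpleGraph in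
theorem HasPolyContainment.of_coarse {V V' : Type*} {G : SimpleGraph V} {G' : SimpleGraph V'}
    {f : V → V'} {g : V' → V} {K M L D d : ℕ} (hG : G.Preconnected)
    (hGfin : ∀ v, (G.neighborSet v).Finite) (hG' : G'.Preconnected)
    (hD : ∀ v, (G'.neighborSet v).encard ≤ D) (hg : ∀ y, G'.dist (f (g y)) y ≤ K)
    (hM : ∀ x x', G'.dist (f x) (f x') ≤ 2 * K + 1 → G.dist x x' ≤ M)
    (hL : ∀ x x', G.dist x x' ≤ M → G'.dist (f x) (f x') ≤ L) (h : HasPolyContainment G d) :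
    HasPolyContainment G' d := by
  obtain ⟨C, hC, hcont⟩ := (hasPolyContainment_iff hGfin).1 h
  refine (hasPolyContainment_iff fun v => Set.finite_of_encard_le_coe (hD v)).2
    ⟨C * (M + 1) ^ (d + 1) * (D + 1) ^ (K + L), by positivity, fun X₀ hX₀ => ?_⟩
  obtain ⟨W, hWcard, hdisj, hfin⟩ := hcont (g '' X₀) (hX₀.image g)
  have hsub := spread_transferDefence_subset (X₀' := X₀) hG hG' (spread_monotone hdisj) hg hM hL
  refine ⟨transferDefence G' f K M (K + L) W (G.spread (g '' X₀) W),
    ⟨fun n hn => ?_, fun n => ?_, ?_⟩⟩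
  · exact transferDefence_card_le hG' hD hC.le hWcard K (K + L) _ n hn
  · exact Set.disjoint_left.2 fun y hy hyW => hyW.2 (hsub n hy)
  · refine (cthickening_finite hG' hD K (hfin.image f)).subset (Set.iUnion_subset fun n => ?_)
    exact (hsub n).trans (cthickening_mono K (Set.image_mono (Set.subset_iUnion _ (M * n))))

/-- polynomial containment of degree at most `d` is a quasi-isometry invariant
among connected graphs of bounded degree. -/
theorem polyContainment_quasiIsometry_invariant {V V' : Type u}
    (G : SimpleGraph V) (G' : SimpleGraph V')
    (hG : G.Connected) (hG' : G'.Connected)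
    (hbG : BoundedDegree G) (hbG' : BoundedDegree G')
    (d : ℕ) (hqi : QuasiIsometric G G')
    (h : HasPolyContainment G d) :
    HasPolyContainment G' d := by
  obtain ⟨f, hf⟩ := hqi
  obtain ⟨K, g, hg⟩ := hf.exists_quasiInverse
  obtain ⟨M, hM⟩ := hf.exists_dist_le_of_dist_map_le (2 * K + 1)
  obtain ⟨L, hL⟩ := hf.exists_dist_map_le_of_dist_le M
  obtain ⟨_, hGfin⟩ := hbG
  obtain ⟨D, hD⟩ := hbG'.exists_encard_neighborSet_le
  exact h.of_coarse hG.preconnected (fun v => (hGfin v).1) hG'.preconnected hD hg hM hL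
end

section
/- Let G be a connected locally finite graph with polynomial growth of degree at most d. Then G has polynomial containment of degree at most max{0, d−2}. -/
universe u

lemma ball_finite {V : Type u} (G : SimpleGraph V) (hconn : G.Connected)
    (hlf : G.LocallyFinite) (g₀ : V) : ∀ n : ℕ, {v : V | G.dist g₀ v ≤ n}.Finite := by
  intro n
  induction n with
  | zero =>
    apply Set.Finite.subset (Set.finite_singleton g₀)
    intro v hv
    simp only [Set.mem_setOf_eq, Nat.le_zero] at hv
    have := (hconn.dist_eq_zero_iff).mp hv
    simp [this]
  | succ n ih =>
    have hfin : ({v : V | G.dist g₀ v ≤ n} ∪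
        ⋃ x ∈ {v : V | G.dist g₀ v ≤ n}, G.neighborSet x).Finite := by
      refine ih.union (ih.biUnion fun x _ => ?_)
      have : Fintype (G.neighborSet x) := hlf x
      exact (G.neighborSet x).toFinite
    refine hfin.subset ?_
    intro v hv
    simp only [Set.mem_setOf_eq] at hv
    by_cases h : G.dist g₀ v ≤ n
    · exact Or.inl h
    · have hd : G.dist g₀ v = n + 1 := le_antisymm hv (not_le.mp h)
      have hne : v ≠ g₀ := by
        intro e; subst e; simp [SimpleGraph.dist_self] at hd
      obtain ⟨w, hw⟩ := (hconn g₀ v).exists_walk_length_eq_dist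
      obtain ⟨x, hadj, p, hp⟩ := SimpleGraph.Walk.exists_eq_cons_of_ne hne w.reverse
      have hplen : p.length = n := by
        have : w.reverse.length = n + 1 := by rw [SimpleGraph.Walk.length_reverse, hw, hd]
        rw [hp] at this
        simpa using this
      have hx : G.dist g₀ x ≤ n := by
        have := SimpleGraph.dist_le p.reverse
        rwa [SimpleGraph.Walk.length_reverse, hplen] at this
      exact Or.inr (Set.mem_biUnion hx hadj.symm)

lemma chunk_index (b : ℕ → ℕ) (hb0 : b 0 = 0) :
    ∀ t i, i < b t → ∃ k, 1 ≤ k ∧ k ≤ t ∧ b (k - 1) ≤ i ∧ i < b k := by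
  intro t
  induction t with
  | zero => intro i hi; omega
  | succ t ih =>
    intro i hi
    by_cases h : i < b t
    · obtain ⟨k, h1, h2, h3, h4⟩ := ih i h
      exact ⟨k, h1, Nat.le_succ_of_le h2, h3, h4⟩
    · refine ⟨t + 1, by omega, le_refl _, ?_, hi⟩
      rw [Nat.add_sub_cancel]; omega

lemma mem_take_drop {α : Type*} (l : List α) (a c i : ℕ) (h1 : a ≤ i) (h2 : i < a + c)
    (h3 : i < l.length) : l[i] ∈ (l.drop a).take c := by
  have hlen : i - a < ((l.drop a).take c).length := by
    simp only [List.length_take, List.length_drop]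
    omega
  have heq : ((l.drop a).take c)[i - a] = l[i] := by
    rw [List.getElem_take, List.getElem_drop]
    congr 1
    omega
  rw [← heq]
  exact List.getElem_mem hlen

def fireSeq {V : Type u} (G : SimpleGraph V) (W : ℕ → Set V) (X₀ : Set V) : ℕ → Set V
  | 0 => X₀
  | n + 1 => {v : V | ∃ u ∈ fireSeq G W X₀ n, v = u ∨ G.Adj u v} \
      (⋃ k ∈ Finset.Icc 1 (n + 1), W k)

/-- a connected locally finite graph of polynomial growth of degree at most `d`
has polynomial containment of degree at most `max 0 (d - 2)`. -/
theorem polyGrowth_implies_polyContainment {V : Type u} (G : SimpleGraph V)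
    (hconn : G.Connected) (hlf : G.LocallyFinite)
    (d : ℕ)
    (hgrowth : ∃ (g₀ : V) (C : ℝ), 0 < C ∧
      ∀ n : ℕ, 1 ≤ n → ((growthFunction G g₀ n : ℝ) ≤ C * (n : ℝ) ^ d)) :
    HasPolyContainment G (max 0 (d - 2)) := by
  classical
  obtain ⟨g₀, C, hC, hg⟩ := hgrowth
  set e : ℕ := max 0 (d - 2) with he
  have hed : e = d - 2 := by simp [he]
  set C₀ : ℕ := ⌈C⌉₊ * 4 ^ d + 1 with hC₀def
  refine ⟨(C₀ : ℝ), by positivity, ?_⟩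
  intro X₀ hX₀
  have hball := ball_finite G hconn hlf g₀
  set R : ℕ := hX₀.toFinset.sup (G.dist g₀) with hRdef
  have hX₀R : X₀ ⊆ {v | G.dist g₀ v ≤ R} := fun x hx =>
    Finset.le_sup (f := G.dist g₀) (hX₀.mem_toFinset.mpr hx)
  set m : ℕ := R + 1 with hmdef
  -- growth bound in ℕ
  have hβ : growthFunction G g₀ (R + 3 * m) ≤ ⌈C⌉₊ * (4 * m) ^ d := by
    have h1 : (growthFunction G g₀ (R + 3 * m) : ℝ) ≤ C * ((R + 3 * m : ℕ) : ℝ) ^ d :=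
      hg _ (by omega)
    have h2 : C * ((R + 3 * m : ℕ) : ℝ) ^ d ≤ (⌈C⌉₊ : ℝ) * ((4 * m : ℕ) : ℝ) ^ d := by
      apply mul_le_mul (Nat.le_ceil C) _ (by positivity) (by positivity)
      apply pow_le_pow_left₀ (by positivity)
      exact_mod_cast (by omega : R + 3 * m ≤ 4 * m)
    exact_mod_cast h1.trans h2
  -- spheres
  set Sph : ℕ → Finset V := fun s => (hball s).toFinset.filter (fun v => G.dist g₀ v = s)
    with hSph
  have hSmem : ∀ s v, v ∈ Sph s ↔ G.dist g₀ v = s := by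
    intro s v
    simp only [hSph, Finset.mem_filter, Set.Finite.mem_toFinset, Set.mem_setOf_eq]
    constructor
    · exact fun h => h.2
    · exact fun h => ⟨le_of_eq h, h⟩
  -- sum of sphere sizes bounded by ball
  have hsum : ∑ s ∈ Finset.Icc (R + 2 * m + 1) (R + 3 * m), (Sph s).card ≤
      growthFunction G g₀ (R + 3 * m) := by
    have hdisj : ∀ a ∈ Finset.Icc (R + 2 * m + 1) (R + 3 * m),
        ∀ b ∈ Finset.Icc (R + 2 * m + 1) (R + 3 * m), a ≠ b →
        Disjoint (Sph a) (Sph b) := by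
      intro a _ b _ hab
      simp only [Finset.disjoint_left]
      intro v hva hvb
      rw [hSmem] at hva hvb
      omega
    rw [← Finset.card_biUnion hdisj]
    have : growthFunction G g₀ (R + 3 * m) = (hball (R + 3 * m)).toFinset.card := by
      rw [growthFunction, Set.ncard_eq_toFinset_card _ (hball (R + 3 * m))]
    rw [this]
    apply Finset.card_le_card
    intro v hv
    simp only [Finset.mem_biUnion, Finset.mem_Icc] at hv
    obtain ⟨s, hs, hvs⟩ := hv
    rw [hSmem] at hvs
    simp only [Set.Finite.mem_toFinset, Set.mem_setOf_eq]
    omega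
  -- pigeonhole: a small sphere
  have hpig : ∃ r ∈ Finset.Icc (R + 2 * m + 1) (R + 3 * m),
      (Sph r).card ≤ C₀ * m ^ (e + 1) := by
    by_contra hcon
    push_neg at hcon
    have hlow : m * (C₀ * m ^ (e + 1) + 1) ≤
        ∑ s ∈ Finset.Icc (R + 2 * m + 1) (R + 3 * m), (Sph s).card := by
      have hcard : (Finset.Icc (R + 2 * m + 1) (R + 3 * m)).card = m := by
        rw [Nat.card_Icc]; omega
      calc m * (C₀ * m ^ (e + 1) + 1)
          = (Finset.Icc (R + 2 * m + 1) (R + 3 * m)).card • (C₀ * m ^ (e + 1) + 1) := by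
            rw [hcard, smul_eq_mul]
        _ ≤ _ := Finset.card_nsmul_le_sum _ _ _ (fun s hs => hcon s hs)
    have hup : ∑ s ∈ Finset.Icc (R + 2 * m + 1) (R + 3 * m), (Sph s).card ≤
        ⌈C⌉₊ * 4 ^ d * m ^ d := by
      refine hsum.trans ?_
      calc growthFunction G g₀ (R + 3 * m) ≤ ⌈C⌉₊ * (4 * m) ^ d := hβ
        _ = ⌈C⌉₊ * 4 ^ d * m ^ d := by rw [mul_pow, mul_assoc]
    have hpow : m ^ d ≤ m ^ (e + 2) := Nat.pow_le_pow_right (by omega) (by omega)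
    have hkey : ⌈C⌉₊ * 4 ^ d * m ^ d < C₀ * m ^ (e + 2) := by
      calc ⌈C⌉₊ * 4 ^ d * m ^ d < C₀ * m ^ d :=
            mul_lt_mul_of_pos_right (by omega) (pow_pos (by omega) d)
        _ ≤ C₀ * m ^ (e + 2) := Nat.mul_le_mul_left _ hpow
    have hexp : m * (C₀ * m ^ (e + 1) + 1) = C₀ * m ^ (e + 2) + m := by ring
    omega
  obtain ⟨r, hrIcc, hrcard⟩ := hpig
  rw [Finset.mem_Icc] at hrIcc
  obtain ⟨hrlo, hrhi⟩ := hrIcc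
  set t0 : ℕ := r - R with ht0def
  have ht0 : 2 * m + 1 ≤ t0 := by omega
  -- budgets
  set c : ℕ → ℕ := fun k => C₀ * k ^ e with hcdef
  set b : ℕ → ℕ := fun t => ∑ k ∈ Finset.Icc 1 t, c k with hbdef
  have hb0 : b 0 = 0 := by simp [hbdef]
  have hbsucc : ∀ k, b (k + 1) = b k + c (k + 1) := by
    intro k
    simp only [hbdef]
    rw [Finset.sum_Icc_succ_top (by omega : 1 ≤ k + 1)]
  -- total budget covers the sphere
  have hLb : (Sph r).card ≤ b t0 := by
    have h2 : C₀ * m ^ (e + 1) ≤ ∑ k ∈ Finset.Icc (m + 1) (2 * m), c k := by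
      have hcard2 : (Finset.Icc (m + 1) (2 * m)).card = m := by rw [Nat.card_Icc]; omega
      calc C₀ * m ^ (e + 1) = (Finset.Icc (m + 1) (2 * m)).card • (C₀ * m ^ e) := by
            rw [hcard2, smul_eq_mul]; ring
        _ ≤ ∑ k ∈ Finset.Icc (m + 1) (2 * m), c k := by
            apply Finset.card_nsmul_le_sum
            intro k hk
            rw [Finset.mem_Icc] at hk
            exact Nat.mul_le_mul_left _ (Nat.pow_le_pow_left (by omega) e)
    have h3 : ∑ k ∈ Finset.Icc (m + 1) (2 * m), c k ≤ b t0 := by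
      apply Finset.sum_le_sum_of_subset
      intro k hk
      rw [Finset.mem_Icc] at hk ⊢
      omega
    omega
  -- the walls
  set L : List V := (Sph r).toList with hLdef
  have hLlen : L.length = (Sph r).card := Finset.length_toList _
  set W : ℕ → Set V := fun k =>
    if 1 ≤ k ∧ k ≤ t0 then {v | v ∈ (L.drop (b (k - 1))).take (c k)} else ∅ with hWdef
  have hWsph : ∀ k, W k ⊆ ↑(Sph r) := by
    intro k v hv
    simp only [hWdef] at hv
    split at hv
    · simp only [Set.mem_setOf_eq] at hv
      have h1 := List.mem_of_mem_take hv
      have h2 := List.mem_of_mem_drop h1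
      simpa using Finset.mem_toList.mp h2
    · exact absurd hv (Set.notMem_empty v)
  have hWr : ∀ k v, v ∈ W k → G.dist g₀ v = r := fun k v hv => (hSmem r v).mp (hWsph k hv)
  have hWfin : ∀ k, (W k).Finite := fun k => (Sph r).finite_toSet.subset (hWsph k)
  have hWcard : ∀ k, (W k).ncard ≤ c k := by
    intro k
    simp only [hWdef]
    split
    · have heq : {v | v ∈ (L.drop (b (k - 1))).take (c k)} =
          (((L.drop (b (k - 1))).take (c k)).toFinset : Set V) := by
        ext v; simp
      rw [heq, Set.ncard_coe_finset]
      calc ((L.drop (b (k - 1))).take (c k)).toFinset.card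
          ≤ ((L.drop (b (k - 1))).take (c k)).length := List.toFinset_card_le _
        _ ≤ c k := by simp [List.length_take]
    · simp
  -- coverage
  have hcover : ∀ n, t0 ≤ n → ↑(Sph r) ⊆ ⋃ k ∈ Finset.Icc 1 n, W k := by
    intro n hn v hv
    have hvL : v ∈ L := Finset.mem_toList.mpr hv
    obtain ⟨i, hi, hvi⟩ := List.mem_iff_getElem.mp hvL
    have hib : i < b t0 := by omega
    obtain ⟨k, hk1, hk2, hk3, hk4⟩ := chunk_index b hb0 t0 i hib
    have hbk : b k = b (k - 1) + c k := by
      obtain ⟨k', rfl⟩ : ∃ k', k = k' + 1 := ⟨k - 1, by omega⟩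
      simpa using hbsucc k' 
    have hmem : v ∈ W k := by
      simp only [hWdef, if_pos (⟨hk1, hk2⟩ : 1 ≤ k ∧ k ≤ t0)]
      rw [← hvi]
      exact mem_take_drop L (b (k - 1)) (c k) i hk3 (by omega) hi
    exact Set.mem_biUnion (Finset.mem_Icc.mpr ⟨hk1, by omega⟩) hmem
  -- the fire
  set X : ℕ → Set V := fireSeq G W X₀ with hXdef
  have hXrec : ∀ n, X (n + 1) = {v : V | ∃ u ∈ X n, v = u ∨ G.Adj u v} \
      (⋃ k ∈ Finset.Icc 1 (n + 1), W k) := fun n => rfl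
  -- invariant
  have hinv : ∀ n, (∀ v ∈ X n, G.dist g₀ v ≤ n + R) ∧ (∀ v ∈ X n, G.dist g₀ v ≤ r - 1) := by
    intro n
    induction n with
    | zero =>
      constructor
      · intro v hv
        have h := hX₀R hv
        simp only [Set.mem_setOf_eq] at h
        omega
      · intro v hv
        have h := hX₀R hv
        simp only [Set.mem_setOf_eq] at h
        omega
    | succ n ih =>
      obtain ⟨ih1, ih2⟩ := ih
      have hstep : ∀ v ∈ X (n + 1), (∃ u ∈ X n, G.dist g₀ v ≤ G.dist g₀ u + 1) ∧
          v ∉ ⋃ k ∈ Finset.Icc 1 (n + 1), W k := by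
        intro v hv
        rw [hXrec n] at hv
        simp only [Set.mem_diff, Set.mem_setOf_eq] at hv
        obtain ⟨⟨u, hu, hcase⟩, hnot⟩ := hv
        refine ⟨⟨u, hu, ?_⟩, hnot⟩
        rcases hcase with rfl | hadj
        · omega
        · have h1 : G.dist u v ≤ 1 := by
            have h := SimpleGraph.dist_le (SimpleGraph.Walk.cons hadj SimpleGraph.Walk.nil)
            simpa using h
          have h2 := hconn.dist_triangle (u := g₀) (v := u) (w := v)
          omega
      constructor
      · intro v hv
        obtain ⟨⟨u, hu, hle⟩, -⟩ := hstep v hv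
        have := ih1 u hu
        omega
      · intro v hv
        obtain ⟨⟨u, hu, hle⟩, hnot⟩ := hstep v hv
        by_cases hcase : n + 1 + R ≤ r - 1
        · have := ih1 u hu
          omega
        · have hn1 : t0 ≤ n + 1 := by omega
          have hvr : G.dist g₀ v ≠ r := by
            intro hdr
            exact hnot (hcover (n + 1) hn1 ((hSmem r v).mpr hdr))
          have := ih2 u hu
          omega
  have hXball : ∀ n, ∀ v ∈ X n, G.dist g₀ v ≤ r - 1 := fun n => (hinv n).2
  -- disjointness
  have hdisjXW : ∀ n, Disjoint (X n) (W (n + 1)) := by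
    intro n
    rw [Set.disjoint_left]
    intro v hvX hvW
    have h1 := hXball n v hvX
    have h2 := hWr (n + 1) v hvW
    omega
  -- monotonicity
  have hmono : ∀ n, X n ⊆ X (n + 1) := by
    intro n v hv
    rw [hXrec n]
    refine ⟨⟨v, hv, Or.inl rfl⟩, ?_⟩
    intro hvU
    simp only [Set.mem_iUnion] at hvU
    obtain ⟨k, hk, hvk⟩ := hvU
    have h1 := hWr k v hvk
    have h2 := hXball n v hv
    omega
  have hmono' : Monotone X := monotone_nat_of_le_succ hmono
  -- stabilization
  have hXfin : ∀ n, (X n).Finite := fun n =>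
    (hball (r - 1)).subset (fun v hv => hXball n v hv)
  have hbdd : BddAbove (Set.range fun n => (X n).ncard) := by
    refine ⟨{v : V | G.dist g₀ v ≤ r - 1}.ncard, ?_⟩
    rintro _ ⟨n, rfl⟩
    exact Set.ncard_le_ncard (fun v hv => hXball n v hv) (hball (r - 1))
  obtain ⟨T, hT⟩ := Set.mem_range.mp (Nat.sSup_mem (Set.range_nonempty _) hbdd)
  have hstab : ∀ n, T ≤ n → X n = X T := by
    intro n hn
    have hsub : X T ⊆ X n := hmono' hn
    have hle : (X n).ncard ≤ (X T).ncard := by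
      rw [hT]
      exact le_csSup hbdd ⟨n, rfl⟩
    exact (Set.eq_of_subset_of_ncard_le hsub hle (hXfin n)).symm
  -- assemble
  refine ⟨W, X, rfl, ?_, hXrec, hdisjXW, ⟨max 1 T, by omega, ?_⟩⟩
  · intro n hn
    refine ⟨hWfin n, ?_⟩
    have h1 : (W n).ncard ≤ C₀ * n ^ e := hWcard n
    calc ((W n).ncard : ℝ) ≤ ((C₀ * n ^ e : ℕ) : ℝ) := by exact_mod_cast h1
      _ = (C₀ : ℝ) * (n : ℝ) ^ e := by push_cast; ring
  · intro n hn
    have h1 : X n = X T := hstab n (le_trans (le_max_right 1 T) hn)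
    have h2 : X (max 1 T) = X T := hstab _ (le_max_right 1 T)
    rw [h1, h2]
end

section
/- Let δ ≥ 3 be an integer. If a connected locally finite graph G contains a subgraph which, with its own combinatorial metric, is quasi-isometric to the infinite δ-regular tree, then G does not have polynomial containment of degree at most d for any non-negative integer d. -/
universe u

/-! Let `g` be a coarse inverse of the quasi-isometry, a quasi-isometric embedding of the tree `T`
into `H ⊆ G`, and suppose walls `W k` with `|W k| ≤ C k ^ d` contain every fire. Start the fire on
a large ball, of radius `s`, around the image of a root `t₀`. For every vertex `u` at depth `m` the
image of the geodesic from `t₀` to `u` can be followed by a walk in `H`; since the contained fire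
never reaches the image of `u`, this walk meets a vertex protected at some time `k`, close to the
image of a geodesic vertex `t` of depth at least of order `k + s`. Charge `u` to that protected
vertex. As `g` is coarsely injective, the vertices charged to a given protected vertex descend
from boundedly many anchors of that depth, so there are `O(β ^ (m - depth))` of them, where
`β = δ - 1`. Summing over the walls, the `β ^ m` vertices at depth `m` would number at most
`β ^ m · O(∑ₖ C k ^ d γ ^ -(k + s))` for some `γ > 1`, which is less than `β ^ m` once `s` is
large: the exponential branching of the tree beats the polynomial budget of firefighters. -/

open SimpleGraph Function

lemma Set.ncard_le_sum_ncard_mul {α ι κ : Type*} {S : Set α} (hS : S.Finite) {K : Finset ι}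
    {W : ι → Set κ} (hW : ∀ i ∈ K, (W i).Finite) (k : α → ι) (w : α → κ)
    (hkw : ∀ u ∈ S, k u ∈ K ∧ w u ∈ W (k u)) (b : ι → ℝ)
    (hb : ∀ i ∈ K, ∀ c ∈ W i, ({u ∈ S | k u = i ∧ w u = c}.ncard : ℝ) ≤ b i) :
    (S.ncard : ℝ) ≤ ∑ i ∈ K, (W i).ncard * b i := by
  have hfiber : ∀ i ∈ K, ({u ∈ S | k u = i}.ncard : ℝ) ≤ (W i).ncard * b i := by
    intro i hi
    have hcover : {u ∈ S | k u = i} ⊆ ⋃ c ∈ (hW i hi).toFinset, {u ∈ S | k u = i ∧ w u = c} :=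
      fun u ⟨huS, hku⟩ => Set.mem_biUnion ((hW i hi).mem_toFinset.mpr (hku ▸ (hkw u huS).2))
        ⟨huS, hku, rfl⟩
    calc ({u ∈ S | k u = i}.ncard : ℝ)
        ≤ ∑ c ∈ (hW i hi).toFinset, ({u ∈ S | k u = i ∧ w u = c}.ncard : ℝ) := by
          exact_mod_cast (Set.ncard_le_ncard hcover
            (hS.subset (Set.iUnion₂_subset fun _ _ _ hu => hu.1))).trans
            (Finset.set_ncard_biUnion_le _ _)
      _ ≤ ∑ _c ∈ (hW i hi).toFinset, b i :=
          Finset.sum_le_sum fun c hc => hb i hi c ((hW i hi).mem_toFinset.mp hc)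
      _ = (W i).ncard * b i := by
          rw [Finset.sum_const, nsmul_eq_mul, Set.ncard_eq_toFinset_card _ (hW i hi)]
  have hcover : S ⊆ ⋃ i ∈ K, {u ∈ S | k u = i} :=
    fun u hu => Set.mem_biUnion (hkw u hu).1 ⟨hu, rfl⟩
  calc (S.ncard : ℝ) ≤ ∑ i ∈ K, ({u ∈ S | k u = i}.ncard : ℝ) := by
        exact_mod_cast (Set.ncard_le_ncard hcover
          (hS.subset (Set.iUnion₂_subset fun _ _ _ hu => hu.1))).trans
          (Finset.set_ncard_biUnion_le _ _)
    _ ≤ ∑ i ∈ K, (W i).ncard * b i := Finset.sum_le_sum hfiber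

lemma exists_one_lt_forall_pow_le_pow {β : ℝ} (hβ : 1 < β) (n : ℕ) :
    ∃ γ : ℝ, 1 < γ ∧ ∀ i j : ℕ, i ≤ n * j → γ ^ i ≤ β ^ j := by
  set γ := β ^ ((n + 1 : ℕ) : ℝ)⁻¹
  have hγ : 1 < γ := Real.one_lt_rpow hβ (by positivity)
  have hγβ : γ ^ (n + 1) = β := Real.rpow_inv_natCast_pow (by linarith) n.succ_ne_zero
  refine ⟨γ, hγ, fun i j hij => ?_⟩
  calc γ ^ i ≤ γ ^ ((n + 1) * j) := pow_le_pow_right₀ hγ.le (hij.trans (by gcongr; omega))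
    _ = β ^ j := by rw [pow_mul, hγβ]

lemma exists_forall_sum_mul_div_pow_lt_one {γ : ℝ} (hγ : 1 < γ) {C E : ℝ} (hC : 0 ≤ C)
    (hE : 0 ≤ E) (d : ℕ) : ∃ s : ℕ, ∀ (K : Finset ℕ) (N : ℕ → ℝ),
      (∀ k ∈ K, N k ≤ C * (k : ℝ) ^ d) → ∑ k ∈ K, N k * (E / γ ^ (k + s)) < 1 := by
  have hγ₀ : 0 < γ := by linarith
  have hsum : Summable fun k : ℕ => (k : ℝ) ^ d * γ⁻¹ ^ k :=
    summable_pow_mul_geometric_of_norm_lt_one d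
      (by rw [norm_inv, Real.norm_of_nonneg hγ₀.le]; exact inv_lt_one_of_one_lt₀ hγ)
  obtain ⟨s, hs⟩ := pow_unbounded_of_one_lt (C * E * ∑' k : ℕ, (k : ℝ) ^ d * γ⁻¹ ^ k) hγ
  refine ⟨s, fun K N hN => ?_⟩
  calc ∑ k ∈ K, N k * (E / γ ^ (k + s))
      ≤ ∑ k ∈ K, C * (k : ℝ) ^ d * (E / γ ^ (k + s)) :=
        Finset.sum_le_sum fun k hk => by gcongr; exact hN k hk
    _ = C * E * (∑ k ∈ K, (k : ℝ) ^ d * γ⁻¹ ^ k) / γ ^ s := by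
        rw [Finset.mul_sum, Finset.sum_div]
        refine Finset.sum_congr rfl fun k _ => ?_
        rw [pow_add, inv_pow]
        field_simp
    _ ≤ C * E * (∑' k : ℕ, (k : ℝ) ^ d * γ⁻¹ ^ k) / γ ^ s := by
        gcongr
        exact hsum.sum_le_tsum K fun k _ => by positivity
    _ < 1 := by rwa [div_lt_one (by positivity)]

namespace SimpleGraph

variable {V : Type*} {G : SimpleGraph V} {x y v w : V}

lemma Walk.dist_getVert_of_length_eq_dist (p : G.Walk x y) (hp : p.length = G.dist x y)
    {i : ℕ} (hi : i ≤ p.length) :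
    G.dist x (p.getVert i) = i ∧ G.dist (p.getVert i) y = p.length - i := by
  have h₁ : G.dist x (p.getVert i) ≤ i := (dist_le (p.take i)).trans (by simp)
  have h₂ : G.dist (p.getVert i) y ≤ p.length - i := (dist_le (p.drop i)).trans (by simp)
  have h₃ := (p.take i).reachable.dist_triangle_left (u := x) (v := p.getVert i) y
  omega

lemma Walk.dist_lt_of_mem_support (p : G.Walk x y) (hp : p.length = G.dist x y)
    (hw : w ∈ p.support) (hne : w ≠ y) : G.dist x w < G.dist x y := by
  classical
  exact hp ▸ (dist_le (p.takeUntil w hw)).trans_lt (p.length_takeUntil_lt_length hw hne)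

lemma Connected.exists_adj_dist_eq (hG : G.Connected) {n : ℕ} (hv : G.dist x v = n + 1) :
    ∃ w, G.Adj w v ∧ G.dist x w = n := by
  obtain ⟨p, hp⟩ := hG.exists_walk_length_eq_dist x v
  have hlen : p.length = n + 1 := hp.trans hv
  refine ⟨p.getVert n, ?_, (p.dist_getVert_of_length_eq_dist hp (by omega)).1⟩
  have hadj := p.adj_getVert_succ (i := n) (by omega)
  rwa [← hlen, p.getVert_length] at hadj

lemma Connected.setOf_dist_eq_zero (hG : G.Connected) : {u | G.dist x u = 0} = {x} := by
  ext; simp [hG.dist_eq_zero_iff, eq_comm]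

lemma Connected.dist_le_add_add (hG : G.Connected) (a b c d : V) :
    G.dist a d ≤ G.dist a b + G.dist b c + G.dist c d := by
  have := hG.dist_triangle (u := a) (v := b) (w := c)
  have := hG.dist_triangle (u := a) (v := c) (w := d)
  omega

lemma finite_setOf_exists_eq_or_adj (hG : ∀ v, (G.neighborSet v).Finite) {s : Set V}
    (hs : s.Finite) : {v | ∃ u ∈ s, v = u ∨ G.Adj u v}.Finite := by
  have : {v | ∃ u ∈ s, v = u ∨ G.Adj u v} = ⋃ u ∈ s, insert u (G.neighborSet u) := by
    ext; simp
  rw [this]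
  exact hs.biUnion fun u _ => (hG u).insert u

lemma Connected.finite_setOf_dist_le (hG : G.Connected) (hfin : ∀ v, (G.neighborSet v).Finite)
    (x : V) (n : ℕ) : {v | G.dist x v ≤ n}.Finite := by
  induction n with
  | zero =>
    refine (Set.finite_singleton x).subset fun v hv => ?_
    exact (hG.dist_eq_zero_iff.mp (Nat.le_zero.mp hv)).symm
  | succ n ih =>
    refine (finite_setOf_exists_eq_or_adj hfin ih).subset fun v hv => ?_
    rcases Nat.le_succ_iff.mp hv with hle | heq
    · exact ⟨v, hle, Or.inl rfl⟩
    · obtain ⟨w, hwv, hw⟩ := hG.exists_adj_dist_eq heq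
      exact ⟨w, hw.le, Or.inr hwv⟩

lemma IsTree.eq_penultimate_of_dist_lt (hT : G.IsTree) (p : G.Walk x y)
    (hp : p.length = G.dist x y) (hadj : G.Adj y w) (hw : G.dist x w < G.dist x y) :
    w = p.penultimate := by
  obtain ⟨q, hq, hql⟩ := hT.connected.exists_path_of_dist x w
  have hy : y ∉ q.support := fun hy => (q.dist_lt_of_mem_support hql hy hadj.ne).not_gt hw
  have hpath := p.isPath_of_length_eq_dist hp
  exact hT.isAcyclic.eq_penultimate_of_adj_end hpath hadj
    (hT.isAcyclic.mem_support_of_ne_mem_support_of_adj_of_isPath hpath hq hadj hy)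

section RegularTree

variable {β : ℕ}

lemma IsTree.ncard_neighborSet_inter_setOf_dist_eq (hT : G.IsTree)
    (hdeg : ∀ v, (G.neighborSet v).Finite ∧ (G.neighborSet v).ncard = β + 1) {n : ℕ}
    (hv : G.dist x v = n + 1) : (G.neighborSet v ∩ {u | G.dist x u = n + 2}).ncard = β := by
  obtain ⟨w, hwv, hw⟩ := hT.connected.exists_adj_dist_eq hv
  obtain ⟨p, hp⟩ := hT.connected.exists_walk_length_eq_dist x v
  have hsplit : G.neighborSet v = insert w (G.neighborSet v ∩ {u | G.dist x u = n + 2}) := by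
    ext u
    simp only [mem_neighborSet, Set.mem_insert_iff, Set.mem_inter_iff, Set.mem_ofPred_eq]
    refine ⟨fun hu => ?_, ?_⟩
    · rcases hT.dist_eq_dist_add_one_of_adj x hu with h | h
      · left
        rw [hT.eq_penultimate_of_dist_lt p hp hu (by omega),
          hT.eq_penultimate_of_dist_lt p hp hwv.symm (by omega)]
      · exact Or.inr ⟨hu, by omega⟩
    · rintro (rfl | ⟨hu, -⟩)
      exacts [hwv.symm, hu]
  have hw' : w ∉ G.neighborSet v ∩ {u | G.dist x u = n + 2} := fun h => by
    have : G.dist x w = n + 2 := h.2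
    omega
  have := congrArg Set.ncard hsplit
  rw [Set.ncard_insert_of_notMem hw' ((hdeg v).1.inter_of_left _), (hdeg v).2] at this
  omega

lemma IsTree.ncard_setOf_dist_eq_add_two (hT : G.IsTree)
    (hdeg : ∀ v, (G.neighborSet v).Finite ∧ (G.neighborSet v).ncard = β + 1) (x : V) (n : ℕ) :
    {u | G.dist x u = n + 2}.ncard = β * {v | G.dist x v = n + 1}.ncard := by
  set S := {v | G.dist x v = n + 1}
  have hS : S.Finite := (hT.connected.finite_setOf_dist_le (fun v => (hdeg v).1) x (n + 1)).subset
    fun v hv => le_of_eq hv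
  have hcover : {u | G.dist x u = n + 2} =
      ⋃ v ∈ S, (G.neighborSet v ∩ {u | G.dist x u = n + 2}) := by
    ext u
    simp only [Set.mem_ofPred_eq, Set.mem_iUnion, Set.mem_inter_iff, mem_neighborSet, exists_prop]
    refine ⟨fun hu => ?_, fun ⟨_, _, _, hu⟩ => hu⟩
    obtain ⟨v, hvu, hv⟩ := hT.connected.exists_adj_dist_eq hu
    exact ⟨v, hv, hvu, hu⟩
  have hdisj : S.PairwiseDisjoint fun v => G.neighborSet v ∩ {u | G.dist x u = n + 2} := by
    intro v hv v' hv' hne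
    refine Set.disjoint_left.mpr fun u ⟨hvu, hu⟩ ⟨hv'u, _⟩ => hne ?_
    obtain ⟨p, hp⟩ := hT.connected.exists_walk_length_eq_dist x u
    have hu : G.dist x u = n + 2 := hu
    have hv : G.dist x v = n + 1 := hv
    have hv' : G.dist x v' = n + 1 := hv'
    rw [hT.eq_penultimate_of_dist_lt p hp (adj_symm _ hvu) (by omega),
      hT.eq_penultimate_of_dist_lt p hp (adj_symm _ hv'u) (by omega)]
  rw [hcover, hS.ncard_biUnion (fun v _ => (hdeg v).1.inter_of_left _) hdisj,
    finsum_mem_congr (s := S) rfl fun v hv => hT.ncard_neighborSet_inter_setOf_dist_eq hdeg hv,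
    finsum_mem_eq_finite_toFinset_sum _ hS, Finset.sum_const, smul_eq_mul,
    Set.ncard_eq_toFinset_card _ hS, mul_comm]

lemma IsTree.ncard_setOf_dist_eq_succ (hT : G.IsTree)
    (hdeg : ∀ v, (G.neighborSet v).Finite ∧ (G.neighborSet v).ncard = β + 1) (x : V) (n : ℕ) :
    {u | G.dist x u = n + 1}.ncard = (β + 1) * β ^ n := by
  induction n with
  | zero =>
    have : {u | G.dist x u = 1} = G.neighborSet x := by ext; simp
    rw [zero_add, this, (hdeg x).2, pow_zero, mul_one]
  | succ n ih => rw [hT.ncard_setOf_dist_eq_add_two hdeg, ih]; ring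

lemma IsTree.pow_le_ncard_setOf_dist_eq (hT : G.IsTree)
    (hdeg : ∀ v, (G.neighborSet v).Finite ∧ (G.neighborSet v).ncard = β + 1) (x : V) (n : ℕ) :
    β ^ n ≤ {u | G.dist x u = n}.ncard := by
  cases n with
  | zero => rw [hT.connected.setOf_dist_eq_zero]; simp
  | succ n =>
    rw [hT.ncard_setOf_dist_eq_succ hdeg, pow_succ']
    exact Nat.mul_le_mul_right _ (Nat.le_succ β)

lemma IsTree.ncard_setOf_dist_eq_le (hT : G.IsTree)
    (hdeg : ∀ v, (G.neighborSet v).Finite ∧ (G.neighborSet v).ncard = β + 1) (hβ : 1 ≤ β)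
    (x : V) (n : ℕ) : {u | G.dist x u = n}.ncard ≤ 2 * β ^ n := by
  cases n with
  | zero => rw [hT.connected.setOf_dist_eq_zero]; simp
  | succ n =>
    rw [hT.ncard_setOf_dist_eq_succ hdeg, pow_succ', ← mul_assoc]
    exact Nat.mul_le_mul_right _ (by omega)

lemma IsTree.ncard_setOf_dist_le_le (hT : G.IsTree)
    (hdeg : ∀ v, (G.neighborSet v).Finite ∧ (G.neighborSet v).ncard = β + 1) (hβ : 1 ≤ β)
    (x : V) (n : ℕ) : {u | G.dist x u ≤ n}.ncard ≤ 2 * (n + 1) * β ^ n := by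
  have hball : {u | G.dist x u ≤ n} = ⋃ r ∈ Finset.range (n + 1), {u | G.dist x u = r} := by
    ext u; simp
  calc {u | G.dist x u ≤ n}.ncard
      ≤ ∑ r ∈ Finset.range (n + 1), {u | G.dist x u = r}.ncard :=
        hball ▸ Finset.set_ncard_biUnion_le _ _
    _ ≤ ∑ _r ∈ Finset.range (n + 1), 2 * β ^ n := Finset.sum_le_sum fun r hr =>
        (hT.ncard_setOf_dist_eq_le hdeg hβ x r).trans
          (Nat.mul_le_mul_left 2 (Nat.pow_le_pow_right hβ (Finset.mem_range_succ_iff.mp hr)))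
    _ = 2 * (n + 1) * β ^ n := by simp; ring

/-- Each anchor at depth `j` accounts for at most `2 * β ^ (m - j)` vertices of `F`: those lie on
the sphere of radius `m - j` around it. -/
lemma IsTree.ncard_mul_le_of_forall_exists_anchor (hT : G.IsTree)
    (hdeg : ∀ v, (G.neighborSet v).Finite ∧ (G.neighborSet v).ncard = β + 1) (hβ : 1 ≤ β)
    {x t : V} {D m : ℕ} {F : Set V} {L : ℝ} (hL : 0 ≤ L)
    (hF : ∀ u ∈ F, ∃ a, G.dist t a ≤ D ∧ L ≤ (β : ℝ) ^ G.dist x a ∧ G.dist x a + G.dist a u = m) :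
    F.ncard * L ≤ 4 * (D + 1) * (β : ℝ) ^ D * (β : ℝ) ^ m := by
  have hfin := hT.connected.finite_setOf_dist_le fun v => (hdeg v).1
  set anchors := {a | G.dist t a ≤ D ∧ G.dist x a ≤ m ∧ L ≤ (β : ℝ) ^ G.dist x a}
  have hA : anchors.Finite := (hfin t D).subset fun a ha => ha.1
  have hcover : F ⊆ ⋃ a ∈ hA.toFinset, {u | G.dist a u = m - G.dist x a} := by
    intro u hu
    obtain ⟨a, hta, hLa, hau⟩ := hF u hu
    exact Set.mem_biUnion (hA.mem_toFinset.mpr ⟨hta, by omega, hLa⟩) (by simp; omega)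
  have hterm : ∀ a ∈ hA.toFinset, ({u | G.dist a u = m - G.dist x a}.ncard : ℝ) * L ≤
      2 * (β : ℝ) ^ m := by
    intro a ha
    obtain ⟨-, ham, hLa⟩ := hA.mem_toFinset.mp ha
    calc ({u | G.dist a u = m - G.dist x a}.ncard : ℝ) * L
        ≤ (2 * β ^ (m - G.dist x a) : ℕ) * (β : ℝ) ^ G.dist x a := by
          gcongr
          exact hT.ncard_setOf_dist_eq_le hdeg hβ a _
      _ = 2 * (β : ℝ) ^ m := by
          push_cast
          rw [mul_assoc, ← pow_add, Nat.sub_add_cancel ham]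
  have hAcard : (hA.toFinset.card : ℝ) ≤ 2 * (D + 1) * (β : ℝ) ^ D := by
    rw [← Set.ncard_eq_toFinset_card _ hA]
    exact_mod_cast (Set.ncard_le_ncard (fun a (ha : a ∈ anchors) => ha.1) (hfin t D)).trans
      (hT.ncard_setOf_dist_le_le hdeg hβ t D)
  have hunion : F.ncard ≤ ∑ a ∈ hA.toFinset, {u | G.dist a u = m - G.dist x a}.ncard :=
    (Set.ncard_le_ncard hcover (hA.toFinset.finite_toSet.biUnion fun a _ =>
      (hfin a _).subset fun _ hu => le_of_eq hu)).trans (Finset.set_ncard_biUnion_le _ _)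
  calc F.ncard * L
      ≤ (∑ a ∈ hA.toFinset, ({u | G.dist a u = m - G.dist x a}.ncard : ℝ)) * L := by
        gcongr; exact_mod_cast hunion
    _ ≤ ∑ _a ∈ hA.toFinset, 2 * (β : ℝ) ^ m := by
        rw [Finset.sum_mul]; exact Finset.sum_le_sum hterm
    _ ≤ 4 * (D + 1) * (β : ℝ) ^ D * (β : ℝ) ^ m := by
        rw [Finset.sum_const, nsmul_eq_mul]
        nlinarith [pow_nonneg (Nat.cast_nonneg (α := ℝ) β) m]

/-- A vertex `u` at depth `m` is charged to the token `(k u, w u)` through the anchor `a u`, which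
lies on a geodesic from `x` to `u`. As there are at least `β ^ m` vertices at depth `m`, the tokens
cannot all have large weight `L`. -/
lemma IsTree.one_le_sum_of_charge {ι κ : Type*} (hT : G.IsTree)
    (hdeg : ∀ v, (G.neighborSet v).Finite ∧ (G.neighborSet v).ncard = β + 1) (hβ : 1 ≤ β)
    {x : V} {m D : ℕ} {K : Finset ι} {W : ι → Set κ} (hW : ∀ i ∈ K, (W i).Finite)
    {L : ι → ℝ} (hL : ∀ i ∈ K, 0 < L i) (k : V → ι) (w : V → κ) (a : V → V)
    (hcharge : ∀ u, G.dist x u = m → k u ∈ K ∧ w u ∈ W (k u) ∧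
      L (k u) ≤ (β : ℝ) ^ G.dist x (a u) ∧ G.dist x (a u) + G.dist (a u) u = m)
    (hanchor : ∀ u u', G.dist x u = m → G.dist x u' = m → k u = k u' → w u = w u' →
      G.dist (a u) (a u') ≤ D) :
    1 ≤ ∑ i ∈ K, (W i).ncard * (4 * (D + 1) * (β : ℝ) ^ D / L i) := by
  set S := {u | G.dist x u = m}
  have hS : S.Finite := (hT.connected.finite_setOf_dist_le (fun v => (hdeg v).1) x m).subset
    fun v hv => le_of_eq hv
  have hβm : (0 : ℝ) < (β : ℝ) ^ m := by positivity
  have hfiber : ∀ i ∈ K, ∀ c ∈ W i, ({u ∈ S | k u = i ∧ w u = c}.ncard : ℝ) ≤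
      4 * (D + 1) * (β : ℝ) ^ D * (β : ℝ) ^ m / L i := by
    intro i hi c hc
    rcases Set.eq_empty_or_nonempty {u ∈ S | k u = i ∧ w u = c} with hempty | ⟨u₁, hu₁, hk₁, hw₁⟩
    · rw [hempty, Set.ncard_empty, Nat.cast_zero]
      have := hL i hi
      positivity
    rw [le_div_iff₀ (hL i hi)]
    refine hT.ncard_mul_le_of_forall_exists_anchor hdeg hβ (x := x) (t := a u₁) (hL i hi).le ?_
    rintro u ⟨hu, hk, hw⟩
    obtain ⟨-, -, hLu, hau⟩ := hcharge u hu
    exact ⟨a u, hanchor u₁ u hu₁ hu (hk₁.trans hk.symm) (hw₁.trans hw.symm), hk ▸ hLu, hau⟩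
  have hcount := Set.ncard_le_sum_ncard_mul hS hW k w (fun u hu => ⟨(hcharge u hu).1,
    (hcharge u hu).2.1⟩) _ hfiber
  have hlow : (β : ℝ) ^ m ≤ S.ncard := by exact_mod_cast hT.pow_le_ncard_setOf_dist_eq hdeg x m
  refine (le_mul_iff_one_le_right hβm).mp (hlow.trans (hcount.trans (le_of_eq ?_)))
  rw [Finset.mul_sum]
  exact Finset.sum_congr rfl fun i _ => by ring

end RegularTree

section CoarseImage

variable {U V' : Type*} {T : SimpleGraph U} {H : SimpleGraph V'}

lemma Connected.exists_walk_near_image (hH : H.Connected) {g : U → V'} {A : ℕ}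
    (hg : ∀ t t', T.Adj t t' → H.dist (g t) (g t') ≤ A) {x y : U} (p : T.Walk x y) :
    ∃ π : H.Walk (g x) (g y), π.length ≤ A * p.length ∧ ∀ i ≤ π.length, ∃ j ≤ p.length,
      i ≤ A * j ∧ H.dist (π.getVert i) (g (p.getVert j)) ≤ A := by
  induction p with
  | nil => exact ⟨.nil, by simp, fun i hi => ⟨0, le_rfl, by simp_all, by simp⟩⟩
  | @cons x z y hxz q ih =>
    obtain ⟨π, hπ, hnear⟩ := ih
    obtain ⟨σ, hσ⟩ := hH.exists_walk_length_eq_dist (g x) (g z)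
    have hσA : σ.length ≤ A := hσ ▸ hg x z hxz
    refine ⟨σ.append π, ?_, fun i hi => ?_⟩
    · rw [Walk.length_append, Walk.length_cons]
      nlinarith
    rw [Walk.length_append] at hi
    rw [Walk.getVert_append]
    split_ifs with hiσ
    · refine ⟨1, by simp, by omega, ?_⟩
      simpa using (dist_le (σ.drop i)).trans (by simp; omega)
    · obtain ⟨j, hj, hij, hdist⟩ := hnear (i - σ.length) (by omega)
      exact ⟨j + 1, by simpa using hj, by rw [mul_add, mul_one]; omega, by simpa using hdist⟩

lemma Connected.dist_le_of_dist_le_of_dist_le (hH : H.Connected) {g : U → V'} {a b A : ℕ}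
    (hg : ∀ t t', T.dist t t' ≤ a * H.dist (g t) (g t') + b) {w : V'} {t t' : U}
    (ht : H.dist w (g t) ≤ A) (ht' : H.dist w (g t') ≤ A) : T.dist t t' ≤ a * (2 * A) + b := by
  have htri := hH.dist_triangle (u := g t) (v := w) (w := g t')
  rw [dist_comm (u := g t) (v := w)] at htri
  exact (hg t t').trans (by gcongr; omega)

end CoarseImage

end SimpleGraph

lemma GraphQuasiIsometry.exists_coarse_inverse {V U : Type*} {H : SimpleGraph V}
    {T : SimpleGraph U} {f : V → U} (hf : GraphQuasiIsometry H T f) (hT : T.Connected) :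
    ∃ (g : U → V) (a b : ℕ), ∀ t t', T.dist t t' ≤ a * H.dist (g t) (g t') + b ∧
      H.dist (g t) (g t') ≤ a * T.dist t t' + b := by
  obtain ⟨lam, ε, K, hlam, hε, -, hbounds, hcoarse⟩ := hf
  choose g hg using hcoarse
  refine ⟨g, ⌈lam⌉₊, ⌈lam * (2 * K + ε)⌉₊, fun t t' => ?_⟩
  obtain ⟨hlow, hup⟩ := hbounds (g t) (g t')
  have h₁ := hT.dist_le_add_add t (f (g t)) (f (g t')) t'
  have h₂ := hT.dist_le_add_add (f (g t)) t t' (f (g t'))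
  rw [dist_comm (u := f (g t')) (v := t')] at h₁
  rw [dist_comm (u := f (g t)) (v := t)] at h₂
  have hK := hg t
  have hK' := hg t'
  have hK₀ : (0 : ℝ) ≤ K := (Nat.cast_nonneg _).trans hK
  have hceil := Nat.le_ceil lam
  have hceil' := Nat.le_ceil (lam * (2 * K + ε))
  have hH₀ : (0 : ℝ) ≤ H.dist (g t) (g t') := Nat.cast_nonneg _
  have hT₀ : (0 : ℝ) ≤ T.dist t t' := Nat.cast_nonneg _
  have hHT : (H.dist (g t) (g t') : ℝ) ≤ lam * (T.dist (f (g t)) (f (g t')) + ε) :=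
    (inv_mul_le_iff₀ (by linarith)).mp (by linarith)
  constructor
  · have h₁ : (T.dist t t' : ℝ) ≤ T.dist t (f (g t)) + T.dist (f (g t)) (f (g t')) +
        T.dist t' (f (g t')) := by exact_mod_cast h₁
    have : (T.dist t t' : ℝ) ≤ ⌈lam⌉₊ * H.dist (g t) (g t') + ⌈lam * (2 * K + ε)⌉₊ := by
      nlinarith
    exact_mod_cast this
  · have h₂ : (T.dist (f (g t)) (f (g t')) : ℝ) ≤ T.dist t (f (g t)) + T.dist t t' +
        T.dist t' (f (g t')) := by exact_mod_cast h₂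
    have : (H.dist (g t) (g t') : ℝ) ≤ ⌈lam⌉₊ * T.dist t t' + ⌈lam * (2 * K + ε)⌉₊ := by
      nlinarith
    exact_mod_cast this

/-- `X n` is the set of vertices on fire at time `n` when the fire spreads along the edges of `G`
and the vertices of `W k` are protected from time `k` on, as in `HasPolyContainment`. -/
def IsFireSpread {V : Type*} (G : SimpleGraph V) (W X : ℕ → Set V) : Prop :=
  ∀ n, X (n + 1) = {v | ∃ u ∈ X n, v = u ∨ G.Adj u v} \ ⋃ k ∈ Finset.Icc 1 (n + 1), W k

namespace IsFireSpread

variable {V : Type*} {G : SimpleGraph V} {W X : ℕ → Set V}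

lemma disjoint (hX : IsFireSpread G W X) (hW : ∀ n, Disjoint (X n) (W (n + 1))) {k n : ℕ}
    (hk : 1 ≤ k) (hkn : k ≤ n + 1) : Disjoint (X n) (W k) := by
  obtain rfl | hkn := eq_or_lt_of_le hkn
  · exact hW n
  obtain ⟨n, rfl⟩ : ∃ n', n = n' + 1 := ⟨n - 1, by omega⟩
  rw [hX n]
  exact Set.disjoint_left.mpr fun v hv hvk =>
    hv.2 (Set.mem_biUnion (Finset.mem_Icc.mpr ⟨hk, by omega⟩) hvk)

lemma monotone (hX : IsFireSpread G W X) (hW : ∀ n, Disjoint (X n) (W (n + 1))) : Monotone X :=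
  monotone_nat_of_le_succ fun n v hv => by
    rw [hX n]
    refine ⟨⟨v, hv, Or.inl rfl⟩, fun hvW => ?_⟩
    obtain ⟨k, hk, hvk⟩ := Set.mem_iUnion₂.mp hvW
    obtain ⟨hk₁, hkn⟩ := Finset.mem_Icc.mp hk
    exact Set.disjoint_left.mp (hX.disjoint hW hk₁ hkn) hv hvk

lemma disjoint_zero (hX : IsFireSpread G W X) (hW : ∀ n, Disjoint (X n) (W (n + 1))) {k : ℕ}
    (hk : 1 ≤ k) : Disjoint (X 0) (W k) :=
  (hX.disjoint hW hk (by omega : k ≤ k - 1 + 1)).mono_left (hX.monotone hW (Nat.zero_le _))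

lemma finite (hX : IsFireSpread G W X) (hG : ∀ v, (G.neighborSet v).Finite)
    (h₀ : (X 0).Finite) (n : ℕ) : (X n).Finite := by
  induction n with
  | zero => exact h₀
  | succ n ih => exact hX n ▸ (finite_setOf_exists_eq_or_adj hG ih).sdiff

lemma getVert_mem_or_exists_mem (hX : IsFireSpread G W X) {x y : V} (p : G.Walk x y)
    (hx : x ∈ X 0) (n : ℕ) :
    p.getVert n ∈ X n ∨ ∃ i ≤ n, ∃ k ∈ Finset.Icc 1 i, p.getVert i ∈ W k := by
  induction n with
  | zero => exact Or.inl (by rwa [p.getVert_zero])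
  | succ n ih =>
    rcases ih with hn | ⟨i, hi, k, hk, hik⟩
    · have hnext : p.getVert (n + 1) = p.getVert n ∨ G.Adj (p.getVert n) (p.getVert (n + 1)) := by
        rcases lt_or_ge n p.length with hlt | hge
        · exact Or.inr (p.adj_getVert_succ hlt)
        · exact Or.inl (by rw [p.getVert_of_length_le hge, p.getVert_of_length_le (by omega)])
      by_cases hW : p.getVert (n + 1) ∈ ⋃ k ∈ Finset.Icc 1 (n + 1), W k
      · obtain ⟨k, hk, hkW⟩ := Set.mem_iUnion₂.mp hW
        exact Or.inr ⟨n + 1, le_rfl, k, hk, hkW⟩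
      · exact Or.inl (hX n ▸ ⟨⟨p.getVert n, hn, hnext⟩, hW⟩)
    · exact Or.inr ⟨i, by omega, k, hk, hik⟩

/-- Since the image of `u` never burns, the fire is stopped along the walk in `H` shadowing a
geodesic from `t₀` to `u`, at a vertex `w` protected no later than the walk reaches it. The walk
advances at most `A` steps per tree edge and reaches `w` only after leaving the initial ball of
radius `s`, whence the depth bound on the anchor `t`. -/
lemma exists_charge {V' U : Type*} {H : SimpleGraph V'} {T : SimpleGraph U}
    (hX : IsFireSpread G W X) (hW : ∀ n, Disjoint (X n) (W (n + 1))) (ι : H →g G)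
    (hH : H.Connected) (hT : T.Connected) {g : U → V'} {A s : ℕ}
    (hg : ∀ t t', T.Adj t t' → H.dist (g t) (g t') ≤ A) {t₀ u : U}
    (hX₀ : {v | G.dist (ι (g t₀)) v ≤ s} ⊆ X 0) (hu : ∀ n, ι (g u) ∉ X n) :
    ∃ k w t, k ∈ Finset.Icc 1 (A * T.dist t₀ u) ∧ ι w ∈ W k ∧ H.dist w (g t) ≤ A ∧
      k + s ≤ 2 * A * T.dist t₀ t ∧ T.dist t₀ t + T.dist t u = T.dist t₀ u := by
  obtain ⟨p, hp⟩ := hT.exists_walk_length_eq_dist t₀ u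
  obtain ⟨π, -, hnear⟩ := hH.exists_walk_near_image hg p
  rcases hX.getVert_mem_or_exists_mem (π.map ι) (hX₀ (by simp)) (π.map ι).length with
    hburn | ⟨i, hi, k, hk, hik⟩
  · exact absurd (Walk.getVert_length _ ▸ hburn) (hu _)
  rw [Walk.length_map] at hi
  rw [Walk.getVert_map] at hik
  obtain ⟨j, hj, hij, hdist⟩ := hnear i hi
  obtain ⟨hk₁, hki⟩ := Finset.mem_Icc.mp hk
  have hsi : s < i := by
    by_contra! his
    have hwalk := dist_le ((π.map ι).take i)
    rw [Walk.take_length, Walk.getVert_map] at hwalk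
    exact Set.disjoint_left.mp (hX.disjoint_zero hW hk₁)
      (hX₀ (hwalk.trans ((min_le_left _ _).trans his))) hik
  obtain ⟨hdepth, hrest⟩ := p.dist_getVert_of_length_eq_dist hp hj
  refine ⟨k, π.getVert i, p.getVert j, Finset.mem_Icc.mpr ⟨hk₁, ?_⟩, hik, hdist, ?_, ?_⟩
  · calc k ≤ A * j := hki.trans hij
      _ ≤ A * T.dist t₀ u := Nat.mul_le_mul_left A (hp ▸ hj)
  · rw [hdepth]; nlinarith
  · rw [hdepth, hrest, hp]; omega

end IsFireSpread

lemma HasPolyContainment.exists_bounded_fire {V : Type*} {G : SimpleGraph V} {d : ℕ}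
    (h : HasPolyContainment G d) (hG : ∀ v, (G.neighborSet v).Finite) :
    ∃ C : ℝ, 0 < C ∧ ∀ X₀ : Set V, X₀.Finite → ∃ W X : ℕ → Set V, X 0 = X₀ ∧
      IsFireSpread G W X ∧ (∀ n, Disjoint (X n) (W (n + 1))) ∧
      (∀ k, 1 ≤ k → (W k).Finite ∧ ((W k).ncard : ℝ) ≤ C * (k : ℝ) ^ d) ∧
      ∃ B : Set V, B.Finite ∧ ∀ n, X n ⊆ B := by
  obtain ⟨C, hC, hfire⟩ := h
  refine ⟨C, hC, fun X₀ hX₀ => ?_⟩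
  obtain ⟨W, X, hX0, hWcard, hX : IsFireSpread G W X, hW, T, -, hT⟩ := hfire X₀ hX₀
  refine ⟨W, X, hX0, hX, hW, hWcard, X T, hX.finite hG (hX0 ▸ hX₀) T, fun n => ?_⟩
  exact (hX.monotone hW (le_max_left n T)).trans (hT _ (le_max_right n T)).le

theorem not_hasPolyContainment_of_isTree_embedding {V V' U : Type*} {G : SimpleGraph V}
    {H : SimpleGraph V'} {T : SimpleGraph U} {β : ℕ} (hG : G.Connected)
    (hGfin : ∀ v, (G.neighborSet v).Finite) (ι : H →g G) (hι : Injective ι) (hH : H.Connected)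
    (hT : T.IsTree) (hdeg : ∀ v, (T.neighborSet v).Finite ∧ (T.neighborSet v).ncard = β + 1)
    (hβ : 2 ≤ β) {g : U → V'} {a b : ℕ}
    (hg : ∀ t t', T.dist t t' ≤ a * H.dist (g t) (g t') + b ∧
      H.dist (g t) (g t') ≤ a * T.dist t t' + b) (d : ℕ) :
    ¬ HasPolyContainment G d := by
  intro hPC
  obtain ⟨C, hC, hfire⟩ := hPC.exists_bounded_fire hGfin
  set A := a + b
  set D := a * (2 * A) + b
  have hgA : ∀ t t', T.Adj t t' → H.dist (g t) (g t') ≤ A := fun t t' h => by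
    simpa [dist_eq_one_iff_adj.mpr h, A] using (hg t t').2
  obtain ⟨γ, hγ, hγβ⟩ := exists_one_lt_forall_pow_le_pow (β := β) (by exact_mod_cast hβ) (2 * A)
  obtain ⟨s, hs⟩ := exists_forall_sum_mul_div_pow_lt_one hγ hC.le
    (E := 4 * (D + 1) * (β : ℝ) ^ D) (by positivity) d
  obtain ⟨t₀⟩ := hT.connected.nonempty
  have : Nonempty V' := ⟨g t₀⟩
  obtain ⟨W, X, hX0, hX, hW, hWcard, B, hB, hXB⟩ :=
    hfire _ (hG.finite_setOf_dist_le hGfin (ι (g t₀)) s)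
  obtain ⟨M, hM⟩ := ((hB.preimage hι.injOn).image (H.dist (g t₀))).bddAbove
  set m := a * M + b + 1 with hm
  have hfar : ∀ u, T.dist t₀ u = m → ∀ n, ι (g u) ∉ X n := fun u hu n hn => by
    have := Nat.mul_le_mul_left a (hM ⟨g u, hXB n hn, rfl⟩)
    have := (hg t₀ u).1
    omega
  choose! k w t hk hw ht hdepth hsum using fun u (hu : T.dist t₀ u = m) =>
    hX.exists_charge hW ι hH hT.connected hgA hX0.ge (hfar u hu)
  have hanchor : ∀ u u', T.dist t₀ u = m → T.dist t₀ u' = m → k u = k u' →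
      ι (w u) = ι (w u') → T.dist (t u) (t u') ≤ D := fun u u' hu hu' _ hww =>
    hH.dist_le_of_dist_le_of_dist_le (fun t t' => (hg t t').1) (ht u hu) (hι hww ▸ ht u' hu')
  refine (hs (Finset.Icc 1 (A * m)) _ fun i hi => (hWcard i (Finset.mem_Icc.mp hi).1).2).not_ge ?_
  exact hT.one_le_sum_of_charge hdeg (by omega) (x := t₀) (m := m) (L := fun i => γ ^ (i + s))
    (fun i hi => (hWcard i (Finset.mem_Icc.mp hi).1).1) (fun i _ => by positivity) k
    (fun u => ι (w u)) t
    (fun u hu => ⟨hu ▸ hk u hu, hw u hu, hγβ _ _ (hdepth u hu), (hsum u hu).trans hu⟩) hanchor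

/-- a connected locally finite graph containing a subgraph quasi-isometric to the
infinite `δ`-regular tree (`δ ≥ 3`) has no polynomial containment of any degree. -/
theorem no_polyContainment_of_regularTree_subgraph {V : Type u} (G : SimpleGraph V)
    (hconn : G.Connected) (hlf : G.LocallyFinite)
    (δ : ℕ) (hδ : 3 ≤ δ)
    (h : ∃ (H : G.Subgraph) (U : Type u) (T : SimpleGraph U),
      IsRegularTree T δ ∧ H.coe.Connected ∧ QuasiIsometric H.coe T) :
    ∀ d : ℕ, ¬ HasPolyContainment G d := by
  obtain ⟨H, U, T, ⟨-, hT, hdeg⟩, hH, f, hf⟩ := h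
  obtain ⟨g, a, b, hg⟩ := hf.exists_coarse_inverse hT.connected
  obtain ⟨β, rfl⟩ : ∃ β, δ = β + 1 := ⟨δ - 1, by omega⟩
  have hGfin : ∀ v, (G.neighborSet v).Finite := fun v => @Set.toFinite _ _ (hlf v).finite
  exact not_hasPolyContainment_of_isTree_embedding hconn hGfin H.hom Subgraph.hom_injective hH hT
    hdeg (by omega) hg
end

section
/- Let Γ be a finitely generated group. If the Cayley graph of Γ with respect to some finite generating set has polynomial containment of degree at most d for some non-negative integer d, then that Cayley graph is amenable, i.e., its Cheeger constant is zero. -/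
universe u

/-!
If `h(G) > 0` and the degrees are bounded by `D`, every finite set `K` of vertices has at least
`c · |K|` outer neighbours, with `c = h(G) / D > 0`. A fire started from a large enough set `X₀`
therefore grows by a factor `1 + c` in each step, while after `n` steps the firefighters have
blocked at most `C · n ^ (d + 1)` vertices; hence `|X n| ≥ A · (1 + c / 2) ^ n`, contradicting
`X n = X T` for `n ≥ T`.
-/

open Filter

lemma exists_pos_forall_pow_le_mul_pow (d : ℕ) {q : ℝ} (hq : 1 < q) :
    ∃ B > 0, ∀ n : ℕ, ((n : ℝ) + 1) ^ d ≤ B * q ^ n := by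
  obtain ⟨B, hB⟩ := (tendsto_pow_const_div_const_pow_of_one_lt d hq).bddAbove_range
  refine ⟨max B 1 * q, by positivity, fun n => ?_⟩
  have h := (hB ⟨n + 1, rfl⟩).trans (le_max_left B 1)
  rw [div_le_iff₀ (by positivity)] at h
  push_cast at h
  calc ((n : ℝ) + 1) ^ d ≤ max B 1 * q ^ (n + 1) := h
    _ = max B 1 * q * q ^ n := by ring

lemma mul_pow_le_of_growth_step {x e : ℕ → ℝ} {c A : ℝ} (hc : 0 ≤ c) (h0 : A ≤ x 0)
    (hstep : ∀ n, (1 + c) * x n - e n ≤ x (n + 1))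
    (he : ∀ n, e n ≤ c / 2 * A * (1 + c / 2) ^ n) (n : ℕ) :
    A * (1 + c / 2) ^ n ≤ x n := by
  induction n with
  | zero => simpa using h0
  | succ n ih =>
    have := mul_le_mul_of_nonneg_left ih (by linarith : 0 ≤ 1 + c)
    calc A * (1 + c / 2) ^ (n + 1)
        = (1 + c) * (A * (1 + c / 2) ^ n) - c / 2 * A * (1 + c / 2) ^ n := by ring
      _ ≤ (1 + c) * x n - e n := by linarith [he n]
      _ ≤ x (n + 1) := hstep n

lemma ncard_biUnion_Icc_le {α : Type*} {W : ℕ → Set α} {C : ℝ} {d : ℕ} (hC : 0 ≤ C)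
    (hW : ∀ k, 1 ≤ k → ((W k).ncard : ℝ) ≤ C * k ^ d) (n : ℕ) :
    ((⋃ k ∈ Finset.Icc 1 n, W k).ncard : ℝ) ≤ C * n ^ (d + 1) :=
  calc ((⋃ k ∈ Finset.Icc 1 n, W k).ncard : ℝ)
      ≤ ∑ k ∈ Finset.Icc 1 n, ((W k).ncard : ℝ) := by
        exact_mod_cast (Finset.Icc 1 n).set_ncard_biUnion_le W
    _ ≤ ∑ _k ∈ Finset.Icc 1 n, C * n ^ d := Finset.sum_le_sum fun k hk => by
        obtain ⟨hk1, hkn⟩ := Finset.mem_Icc.mp hk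
        exact (hW k hk1).trans (by gcongr)
    _ = C * n ^ (d + 1) := by
        rw [Finset.sum_const, Nat.card_Icc, Nat.add_sub_cancel, nsmul_eq_mul]
        ring

section Expansion

variable {V : Type*} (G : SimpleGraph V)

def closedNbhd (K : Set V) : Set V := {v | ∃ u ∈ K, v = u ∨ G.Adj u v}

def HasVertexExpansion (c : ℝ) : Prop :=
  ∀ K : Set V, K.Finite → c * K.ncard ≤ (closedNbhd G K \ K).ncard

variable {G}

lemma subset_closedNbhd (K : Set V) : K ⊆ closedNbhd G K := fun u hu => ⟨u, hu, Or.inl rfl⟩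

lemma finite_closedNbhd (hloc : ∀ v, (G.neighborSet v).Finite) {K : Set V} (hK : K.Finite) :
    (closedNbhd G K).Finite := by
  refine (hK.union (hK.biUnion fun u _ => hloc u)).subset ?_
  rintro v ⟨u, hu, rfl | huv⟩
  · exact Or.inl hu
  · exact Or.inr (Set.mem_biUnion hu huv)

lemma ncard_edgeBoundary_le {D : ℕ}
    (hdeg : ∀ v, (G.neighborSet v).Finite ∧ (G.neighborSet v).ncard ≤ D)
    {K : Set V} (hK : K.Finite) :
    (edgeBoundary G K).ncard ≤ D * (closedNbhd G K \ K).ncard := by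
  classical
  have hM : (closedNbhd G K \ K).Finite :=
    (finite_closedNbhd (fun v => (hdeg v).1) hK).sdiff
  have hsub :
      edgeBoundary G K ⊆ ⋃ v ∈ hM.toFinset, (fun u => s(u, v)) '' G.neighborSet v := by
    rintro e ⟨huv, u, v, rfl, hu, hv⟩
    exact Set.mem_biUnion (hM.mem_toFinset.mpr ⟨⟨u, hu, Or.inr huv⟩, hv⟩)
      ⟨u, huv.symm, rfl⟩
  calc (edgeBoundary G K).ncard
      ≤ (⋃ v ∈ hM.toFinset, (fun u => s(u, v)) '' G.neighborSet v).ncard :=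
        Set.ncard_le_ncard hsub
          (hM.toFinset.finite_toSet.biUnion fun v _ => (hdeg v).1.image _)
    _ ≤ ∑ v ∈ hM.toFinset, ((fun u => s(u, v)) '' G.neighborSet v).ncard :=
        hM.toFinset.set_ncard_biUnion_le _
    _ ≤ hM.toFinset.card • D := Finset.sum_le_card_nsmul _ _ _ fun v _ =>
        (Set.ncard_image_le (hdeg v).1).trans (hdeg v).2
    _ = D * (closedNbhd G K \ K).ncard := by
        rw [smul_eq_mul, mul_comm, Set.ncard_eq_toFinset_card _ hM]

lemma cheegerConstant_nonneg : 0 ≤ cheegerConstant G :=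
  Real.sInf_nonneg (by rintro r ⟨K, -, -, rfl⟩; positivity)

lemma cheegerConstant_mul_ncard_le {K : Set V} (hK : K.Finite) (hne : K.Nonempty) :
    cheegerConstant G * K.ncard ≤ (edgeBoundary G K).ncard := by
  have hpos : (0 : ℝ) < K.ncard := by exact_mod_cast (Set.ncard_pos hK).mpr hne
  rw [← le_div_iff₀ hpos]
  exact csInf_le ⟨0, by rintro r ⟨K, -, -, rfl⟩; positivity⟩ ⟨K, hK, hne, rfl⟩

lemma BoundedDegree.exists_hasVertexExpansion (hG : BoundedDegree G)
    (hpos : 0 < cheegerConstant G) : ∃ c > 0, HasVertexExpansion G c := by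
  obtain ⟨D, hD⟩ := hG
  refine ⟨cheegerConstant G / (D + 1), by positivity, fun K hK => ?_⟩
  rcases K.eq_empty_or_nonempty with rfl | hne
  · simp
  have hdeg : ∀ v, (G.neighborSet v).Finite ∧ (G.neighborSet v).ncard ≤ D + 1 :=
    fun v => ⟨(hD v).1, (hD v).2.trans D.le_succ⟩
  have hbound : ((edgeBoundary G K).ncard : ℝ) ≤ (D + 1) * (closedNbhd G K \ K).ncard := by
    exact_mod_cast ncard_edgeBoundary_le hdeg hK
  rw [div_mul_eq_mul_div, div_le_iff₀ (by positivity), mul_comm _ ((D : ℝ) + 1)]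
  exact (cheegerConstant_mul_ncard_le hK hne).trans hbound

namespace HasVertexExpansion

variable {c : ℝ}

lemma infinite [Nonempty V] (hexp : HasVertexExpansion G c) (hc : 0 < c) : Infinite V := by
  by_contra hfin
  rw [not_infinite_iff_finite] at hfin
  have h := hexp Set.univ Set.finite_univ
  rw [Set.sdiff_eq_empty.mpr (Set.subset_univ _), Set.ncard_empty, Set.ncard_univ] at h
  have : (0 : ℝ) < Nat.card V := by exact_mod_cast Nat.card_pos
  norm_num at h
  nlinarith

lemma finite_closedNbhd (hexp : HasVertexExpansion G c) (hc : 0 < c) {K : Set V}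
    (hK : K.Finite) : (closedNbhd G K).Finite := by
  rcases K.eq_empty_or_nonempty with rfl | hne
  · simp [closedNbhd]
  have hK0 : (0 : ℝ) < K.ncard := by exact_mod_cast (Set.ncard_pos hK).mpr hne
  -- `ncard` of an infinite set is `0`, so expansion forces the outer boundary to be finite.
  have hout : (closedNbhd G K \ K).Finite :=
    Set.finite_of_ncard_pos (by exact_mod_cast (mul_pos hc hK0).trans_le (hexp K hK))
  rw [← Set.sdiff_union_of_subset (subset_closedNbhd K)]
  exact hout.union hK

lemma le_ncard_closedNbhd_diff (hexp : HasVertexExpansion G c) (hc : 0 < c) {K U : Set V}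
    (hK : K.Finite) (hU : U.Finite) :
    (1 + c) * K.ncard - U.ncard ≤ (closedNbhd G K \ U).ncard := by
  have hN := hexp.finite_closedNbhd hc hK
  have hsplit : ((closedNbhd G K \ K).ncard : ℝ) + K.ncard = (closedNbhd G K).ncard := by
    exact_mod_cast Set.ncard_sdiff_add_ncard_of_subset (subset_closedNbhd K) hN
  have hdrop : ((closedNbhd G K).ncard : ℝ) ≤ (closedNbhd G K \ U).ncard + U.ncard := by
    exact_mod_cast Set.ncard_le_ncard_sdiff_add_ncard _ _ hU
  linarith [hexp K hK]

lemma not_hasPolyContainment [Nonempty V] (hexp : HasVertexExpansion G c) (hc : 0 < c) (d : ℕ) :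
    ¬ HasPolyContainment G d := by
  rintro ⟨C, hC, hcont⟩
  have := hexp.infinite hc
  have hq : 1 < 1 + c / 2 := by linarith
  obtain ⟨B, hB, hpow⟩ := exists_pos_forall_pow_le_mul_pow (d + 1) hq
  set A := 2 * C * B / c with hAdef
  have hA : 0 < A := by positivity
  obtain ⟨X₀, -, hX₀, hX₀card⟩ :=
    (Set.infinite_univ (α := V)).exists_subset_ncard_eq ⌈A⌉₊
  obtain ⟨W, X, hX0, hW, hXstep, -, T, -, hstab⟩ := hcont X₀ hX₀
  set U : ℕ → Set V := fun n => ⋃ k ∈ Finset.Icc 1 (n + 1), W k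
  have hUfin : ∀ n, (U n).Finite := fun n =>
    (Finset.finite_toSet _).biUnion fun k hk => (hW k (Finset.mem_Icc.mp hk).1).1
  have hXfin : ∀ n, (X n).Finite := by
    intro n
    induction n with
    | zero => rwa [hX0]
    | succ n ih => rw [hXstep]; exact (hexp.finite_closedNbhd hc ih).sdiff
  have hgrowth : ∀ n, A * (1 + c / 2) ^ n ≤ (X n).ncard :=
    mul_pow_le_of_growth_step (x := fun n => ((X n).ncard : ℝ))
      (e := fun n => ((U n).ncard : ℝ)) hc.le (by rw [hX0, hX₀card]; exact Nat.le_ceil A)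
      (fun n => by rw [hXstep]; exact hexp.le_ncard_closedNbhd_diff hc (hXfin n) (hUfin n))
      fun n => calc ((U n).ncard : ℝ)
          ≤ C * ((n + 1 : ℕ) : ℝ) ^ (d + 1) :=
            ncard_biUnion_Icc_le hC.le (fun k hk => (hW k hk).2) (n + 1)
        _ ≤ C * (B * (1 + c / 2) ^ n) := by push_cast; gcongr; exact hpow n
        _ = c / 2 * A * (1 + c / 2) ^ n := by rw [hAdef]; field_simp
  have hunbounded : Tendsto (fun n => A * (1 + c / 2) ^ n) atTop atTop :=
    (tendsto_pow_atTop_atTop_of_one_lt hq).const_mul_atTop hA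
  obtain ⟨n, hn, hTn⟩ :=
    ((hunbounded.eventually_gt_atTop ((X T).ncard : ℝ)).and (eventually_ge_atTop T)).exists
  have := hgrowth n
  rw [hstab n hTn] at this
  linarith

end HasVertexExpansion

end Expansion

lemma cayleyGraph_neighborSet_subset {Γ : Type*} [Group Γ] (S : Set Γ) (u : Γ) :
    (cayleyGraph Γ S).neighborSet u ⊆ (u * ·) '' (S ∪ S⁻¹) := by
  rintro v ⟨-, ⟨s, hs, rfl⟩ | ⟨s, hs, hv⟩⟩
  · exact ⟨s, Or.inl hs, rfl⟩
  · exact ⟨s⁻¹, Or.inr (by simpa using hs), by rw [hv]; group⟩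

lemma cayleyGraph_boundedDegree {Γ : Type*} [Group Γ] {S : Set Γ} (hS : S.Finite) :
    BoundedDegree (cayleyGraph Γ S) := by
  have hfin : ∀ u : Γ, ((u * ·) '' (S ∪ S⁻¹)).Finite := fun u => (hS.union hS.inv).image _
  exact ⟨(S ∪ S⁻¹).ncard, fun u => ⟨(hfin u).subset (cayleyGraph_neighborSet_subset S u),
    (Set.ncard_le_ncard (cayleyGraph_neighborSet_subset S u) (hfin u)).trans
      (Set.ncard_image_le (hS.union hS.inv))⟩⟩

theorem cayley_polyContainment_implies_amenable_general {Γ : Type u} [Group Γ]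
    (S : Set Γ) (hS : S.Finite)
    (d : ℕ) (h : HasPolyContainment (cayleyGraph Γ S) d) :
    cheegerConstant (cayleyGraph Γ S) = 0 := by
  refine le_antisymm ?_ cheegerConstant_nonneg
  by_contra! hpos
  obtain ⟨c, hc, hexp⟩ := (cayleyGraph_boundedDegree hS).exists_hasVertexExpansion hpos
  exact hexp.not_hasPolyContainment hc d h

/-- if the Cayley graph of a finitely generated group has polynomial containment
of degree at most `d` for some `d`, then the Cayley graph is amenable. -/
theorem cayley_polyContainment_implies_amenable {Γ : Type u} [Group Γ]
    (S : Set Γ) (hS : S.Finite) (hgen : Subgroup.closure S = ⊤)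
    (d : ℕ) (h : HasPolyContainment (cayleyGraph Γ S) d) :
    cheegerConstant (cayleyGraph Γ S) = 0 :=
  cayley_polyContainment_implies_amenable_general S hS d h
end

section
/- Every finitely generated virtually nilpotent group has polynomial growth: for every finite generating set S of such a group Γ there are a constant C > 0 and a non-negative integer d such that the number of elements of Γ of word length at most n with respect to S is at most C·n^d for every positive integer n. -/
universe u

/-!
Nilpotent groups: induct on the nilpotency class. Enumerate the finite set `S` as `f : Fin k → G`
and collect a word of length `n` in the `f i`: moving a letter `f j` to the left of a smaller
letter `f i` leaves the commutator `[f j, f i]` behind, and pushing a commutator of weight `w`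
through a letter creates one of weight `w + 1`. Commutators of weight beyond the class vanish, so
every such word equals a sorted word of length `≤ n` (at most `(n + 1) ^ k` of these) times a word
of length polynomial in `n` in finitely many commutators. These generate a subgroup of smaller
class, whose growth is polynomial by induction.

Finite index: if `R` meets every left coset of `H` and `1 ∈ R`, then a word of length `n` in `S`
equals `r * h` with `r ∈ R` and `h` a word of length `n` in the finite set `R⁻¹ S R ∩ H`
(Schreier's rewriting).
-/

open Set Pointwise
open scoped commutatorElement

def HasPolynomialGrowth {M : Type*} [Monoid M] (S : Set M) : Prop :=
  ∃ C d : ℕ, ∀ n, (insert 1 S ^ n).ncard ≤ C * (n + 1) ^ d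

section Balls

variable {M : Type*} [Monoid M]

theorem Set.Finite.pow {s : Set M} (hs : s.Finite) : ∀ n : ℕ, (s ^ n).Finite
  | 0 => by simp
  | n + 1 => by rw [pow_succ]; exact (hs.pow n).mul hs

theorem mem_insert_one_pow_iff {S : Set M} {g : M} {n : ℕ} :
    g ∈ insert 1 S ^ n ↔ ∃ L : List M, L.length ≤ n ∧ (∀ x ∈ L, x ∈ S) ∧ L.prod = g := by
  induction n generalizing g with
  | zero => simp [eq_comm]
  | succ n ih =>
    rw [pow_succ', Set.mem_mul]
    constructor
    · rintro ⟨x, rfl | hx, y, hy, rfl⟩ <;> obtain ⟨L, hLn, hLS, rfl⟩ := ih.mp hy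
      · exact ⟨L, by omega, hLS, by simp⟩
      · exact ⟨x :: L, by simpa using hLn, by simpa [hx] using hLS, rfl⟩
    · rintro ⟨_ | ⟨x, L⟩, hLn, hLS, rfl⟩
      · exact ⟨1, mem_insert _ _, 1, ih.mpr ⟨[], by simp, by simp, rfl⟩, by simp⟩
      · simp only [List.mem_cons, forall_eq_or_imp] at hLS
        exact ⟨x, mem_insert_of_mem _ hLS.1, L.prod,
          ih.mpr ⟨L, by simpa using hLn, hLS.2, rfl⟩, rfl⟩

end Balls

theorem Set.ncard_mul_le {M : Type*} [Mul M] [IsCancelMul M] (s t : Set M) :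
    (s * t).ncard ≤ s.ncard * t.ncard :=
  Set.natCard_mul_le

theorem List.exists_map_eq_of_forall_mem_range {α β : Type*} {f : α → β} :
    ∀ {l : List β}, (∀ x ∈ l, x ∈ Set.range f) → ∃ l' : List α, l'.map f = l
  | [], _ => ⟨[], rfl⟩
  | _ :: _, h => by
    obtain ⟨⟨a, rfl⟩, h'⟩ := List.forall_mem_cons.mp h
    obtain ⟨l', rfl⟩ := exists_map_eq_of_forall_mem_range h'
    exact ⟨a :: l', rfl⟩

theorem add_one_pow_succ_add_pow_le (m a : ℕ) :
    (m + 1) ^ (a + 1) + (m + 1) ^ a ≤ (m + 2) ^ (a + 1) :=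
  calc (m + 1) ^ (a + 1) + (m + 1) ^ a = (m + 1) ^ a * (m + 2) := by ring
    _ ≤ (m + 2) ^ a * (m + 2) := Nat.mul_le_mul_right _ (Nat.pow_le_pow_left (by omega) a)
    _ = (m + 2) ^ (a + 1) := (pow_succ _ _).symm

theorem ncard_sortedLE_length_le {ι : Type*} [LinearOrder ι] [Finite ι] (n : ℕ) :
    {P : List ι | P.SortedLE ∧ P.length ≤ n}.ncard ≤ (n + 1) ^ Nat.card ι := by
  -- a sorted list is determined by how often each letter occurs in it
  have hinj : InjOn (fun P i => (⟨min (P.count i) n, by omega⟩ : Fin (n + 1)))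
      {P : List ι | P.SortedLE ∧ P.length ≤ n} := by
    intro P hP Q hQ hPQ
    refine List.Perm.eq_of_sortedLE hP.1 hQ.1 (List.perm_iff_count.mpr fun i => ?_)
    have hi := congrArg Fin.val (congrFun hPQ i)
    have hPi := (P.count_le_length (a := i)).trans hP.2
    have hQi := (Q.count_le_length (a := i)).trans hQ.2
    simp only at hi
    omega
  calc _ ≤ (univ : Set (ι → Fin (n + 1))).ncard :=
        ncard_le_ncard_of_injOn _ (fun _ _ => mem_univ _) hinj finite_univ
    _ = (n + 1) ^ Nat.card ι := by
      rw [ncard_univ, Nat.card_fun, Nat.card_eq_fintype_card, Fintype.card_fin]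

section Collection

variable {G : Type*} [Group G] {ι : Type*} (f : ι → G)

-- `iterComm f w` consists of left-normed commutators of weight `w + 1`, for the bracket
-- `[c, s] = c⁻¹ * s⁻¹ * c * s`, which satisfies `c * s = s * c * [c, s]`.
def iterComm : ℕ → Set G
  | 0 => range f
  | w + 1 => image2 (fun c s => c⁻¹ * s⁻¹ * c * s) (iterComm w) (range f)

def iterComms (W : ℕ) : Set G := ⋃ w ∈ Ico 1 W, iterComm f w

theorem iterComm_finite [Finite ι] : ∀ w, (iterComm f w).Finite
  | 0 => finite_range f
  | w + 1 => (iterComm_finite w).image2 _ (finite_range f)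

theorem iterComms_finite [Finite ι] (W : ℕ) : (iterComms f W).Finite :=
  (finite_Ico 1 W).biUnion fun w _ => iterComm_finite f w

theorem iterComm_subset_lowerCentralSeries {H : Subgroup G} (hf : ∀ i, f i ∈ H) :
    ∀ w, iterComm f w ⊆ H.lowerCentralSeries w
  | 0 => range_subset_iff.mpr hf
  | w + 1 => by
    rintro _ ⟨c, hc, _, ⟨i, rfl⟩, rfl⟩
    have hcomm : c⁻¹ * (f i)⁻¹ * c * f i = ⁅c⁻¹, (f i)⁻¹⁆ := by simp [commutatorElement_def]
    show c⁻¹ * (f i)⁻¹ * c * f i ∈ ⁅H.lowerCentralSeries w, H⁆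
    rw [hcomm]
    exact Subgroup.commutator_mem_commutator
      (inv_mem (iterComm_subset_lowerCentralSeries hf w hc)) (inv_mem (hf i))

theorem iterComms_subset_lowerCentralSeries_one {H : Subgroup G} (hf : ∀ i, f i ∈ H) (W : ℕ) :
    iterComms f W ⊆ H.lowerCentralSeries 1 := by
  simp only [iterComms, iUnion_subset_iff, mem_Ico]
  exact fun w hw => (iterComm_subset_lowerCentralSeries f hf w).trans
    (Subgroup.lowerCentralSeries_antitone H hw.1)

variable {f} {W : ℕ}

theorem iterComm_subset_one (hW : iterComm f W ⊆ {1}) {w : ℕ} (hw : W ≤ w) :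
    iterComm f w ⊆ {1} := by
  induction w, hw using Nat.le_induction with
  | base => exact hW
  | succ w _ ih =>
    rintro _ ⟨c, hc, _, ⟨i, rfl⟩, rfl⟩
    obtain rfl : c = 1 := ih hc
    simp

theorem exists_mul_prod_eq_prod_mul (hW : iterComm f W ⊆ {1}) (L : List ι) {w : ℕ}
    (hw : 1 ≤ w) {c : G} (hc : c ∈ iterComm f w) :
    ∃ u : List G, c * (L.map f).prod = (L.map f).prod * u.prod ∧
      u.length ≤ (L.length + 1) ^ (W - w) ∧ ∀ x ∈ u, x ∈ iterComms f W := by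
  induction L generalizing w c with
  | nil =>
    rcases le_or_gt W w with hWw | hwW
    · obtain rfl : c = 1 := iterComm_subset_one hW hWw hc
      exact ⟨[], by simp, by simp, by simp⟩
    · refine ⟨[c], by simp, by simp, ?_⟩
      simpa [iterComms] using ⟨w, ⟨hw, hwW⟩, hc⟩
  | cons i L ih =>
    rcases le_or_gt W w with hWw | hwW
    · obtain rfl : c = 1 := iterComm_subset_one hW hWw hc
      exact ⟨[], by simp, by simp, by simp⟩
    have hd : c⁻¹ * (f i)⁻¹ * c * f i ∈ iterComm f (w + 1) :=
      mem_image2_of_mem hc (mem_range_self i)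
    obtain ⟨u₁, h₁, hl₁, hm₁⟩ := ih hw hc
    obtain ⟨u₂, h₂, hl₂, hm₂⟩ := ih (by omega) hd
    refine ⟨u₁ ++ u₂, ?_, ?_, ?_⟩
    · calc c * ((i :: L).map f).prod
          = f i * c * ((c⁻¹ * (f i)⁻¹ * c * f i) * (L.map f).prod) := by simp; group
        _ = f i * (c * (L.map f).prod) * u₂.prod := by rw [h₂]; group
        _ = ((i :: L).map f).prod * (u₁ ++ u₂).prod := by simp [h₁, mul_assoc]
    · obtain ⟨a, ha⟩ : ∃ a, W - w = a + 1 := ⟨W - (w + 1), by omega⟩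
      have ha' : W - (w + 1) = a := by omega
      rw [ha] at hl₁ ⊢
      rw [ha'] at hl₂
      show _ ≤ (L.length + 2) ^ (a + 1)
      linarith [add_one_pow_succ_add_pow_le L.length a, List.length_append (as := u₁) (bs := u₂)]
    · simpa [or_imp, forall_and] using ⟨hm₁, hm₂⟩

variable [LinearOrder ι]

theorem exists_mul_prod_eq_orderedInsert_mul (hW : iterComm f W ⊆ {1}) (j : ι) :
    ∀ P : List ι, ∃ u : List G,
    f j * (P.map f).prod = ((P.orderedInsert (· ≤ ·) j).map f).prod * u.prod ∧
      u.length ≤ (P.length + 1) ^ (W + 1) ∧ ∀ x ∈ u, x ∈ iterComms f W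
  | [] => ⟨[], by simp, by simp, by simp⟩
  | i :: P => by
    by_cases hji : j ≤ i
    · exact ⟨[], by simp [hji], by simp, by simp⟩
    have hd : (f j)⁻¹ * (f i)⁻¹ * f j * f i ∈ iterComm f 1 :=
      mem_image2_of_mem (mem_range_self j) (mem_range_self i)
    obtain ⟨u₁, h₁, hl₁, hm₁⟩ := exists_mul_prod_eq_orderedInsert_mul hW j P
    obtain ⟨u₂, h₂, hl₂, hm₂⟩ := exists_mul_prod_eq_prod_mul hW P le_rfl hd
    refine ⟨u₁ ++ u₂, ?_, ?_, ?_⟩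
    · calc f j * ((i :: P).map f).prod
          = f i * f j * (((f j)⁻¹ * (f i)⁻¹ * f j * f i) * (P.map f).prod) := by simp; group
        _ = f i * (f j * (P.map f).prod) * u₂.prod := by rw [h₂]; group
        _ = (((i :: P).orderedInsert (· ≤ ·) j).map f).prod * (u₁ ++ u₂).prod := by
          simp [hji, h₁, mul_assoc]
    · have : (P.length + 1) ^ (W - 1) ≤ (P.length + 1) ^ W :=
        Nat.pow_le_pow_right (by omega) (by omega)
      show _ ≤ (P.length + 2) ^ (W + 1)
      linarith [add_one_pow_succ_add_pow_le P.length W, List.length_append (as := u₁) (bs := u₂)]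
    · simpa [or_imp, forall_and] using ⟨hm₁, hm₂⟩

theorem exists_prod_eq_insertionSort_mul (hW : iterComm f W ⊆ {1}) : ∀ L : List ι, ∃ u : List G,
    (L.map f).prod = ((L.insertionSort (· ≤ ·)).map f).prod * u.prod ∧
      u.length ≤ (L.length + 1) ^ (W + 2) ∧ ∀ x ∈ u, x ∈ iterComms f W
  | [] => ⟨[], by simp, by simp, by simp⟩
  | j :: L => by
    obtain ⟨u₁, h₁, hl₁, hm₁⟩ := exists_prod_eq_insertionSort_mul hW L
    obtain ⟨u₂, h₂, hl₂, hm₂⟩ :=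
      exists_mul_prod_eq_orderedInsert_mul hW j (L.insertionSort (· ≤ ·))
    refine ⟨u₂ ++ u₁, ?_, ?_, ?_⟩
    · simp only [List.insertionSort_cons, List.map_cons, List.prod_cons, List.prod_append]
      rw [h₁, ← mul_assoc, h₂, mul_assoc]
    · rw [List.length_insertionSort] at hl₂
      show _ ≤ (L.length + 2) ^ (W + 1 + 1)
      linarith [add_one_pow_succ_add_pow_le L.length (W + 1),
        List.length_append (as := u₂) (bs := u₁)]
    · simpa [or_imp, forall_and] using ⟨hm₂, hm₁⟩

theorem insert_one_range_pow_subset (hW : iterComm f W ⊆ {1}) (n : ℕ) :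
    insert 1 (range f) ^ n ⊆ (fun P : List ι => (P.map f).prod) '' {P | P.SortedLE ∧ P.length ≤ n} *
      insert 1 (iterComms f W) ^ ((n + 1) ^ (W + 2)) := by
  intro g hg
  obtain ⟨L', hLn, hLS, rfl⟩ := mem_insert_one_pow_iff.mp hg
  obtain ⟨L, rfl⟩ := List.exists_map_eq_of_forall_mem_range hLS
  obtain ⟨u, hu, hul, hum⟩ := exists_prod_eq_insertionSort_mul hW L
  rw [List.length_map] at hLn
  refine ⟨_, ⟨L.insertionSort (· ≤ ·), ⟨List.sortedLE_insertionSort, ?_⟩, rfl⟩, u.prod,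
    mem_insert_one_pow_iff.mpr ⟨u, hul.trans ?_, hum, rfl⟩, hu.symm⟩
  · rwa [List.length_insertionSort]
  · exact Nat.pow_le_pow_left (by omega) _

theorem HasPolynomialGrowth.range_of_iterComms [Finite ι] (hW : iterComm f W ⊆ {1})
    (hT : HasPolynomialGrowth (iterComms f W)) : HasPolynomialGrowth (range f) := by
  obtain ⟨C, d, hCd⟩ := hT
  refine ⟨C * 2 ^ d, Nat.card ι + (W + 2) * d, fun n => ?_⟩
  have hsorted : {P : List ι | P.SortedLE ∧ P.length ≤ n}.Finite :=
    (List.finite_length_le ι n).subset fun _ hP => hP.2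
  calc (insert 1 (range f) ^ n).ncard
      ≤ ((fun P : List ι => (P.map f).prod) '' {P | P.SortedLE ∧ P.length ≤ n} *
          insert 1 (iterComms f W) ^ ((n + 1) ^ (W + 2))).ncard :=
        ncard_le_ncard (insert_one_range_pow_subset hW n)
          ((hsorted.image _).mul (((iterComms_finite f W).insert 1).pow _))
    _ ≤ (n + 1) ^ Nat.card ι * (C * ((n + 1) ^ (W + 2) + 1) ^ d) :=
        (ncard_mul_le _ _).trans (Nat.mul_le_mul
          ((ncard_image_le hsorted).trans (ncard_sortedLE_length_le n)) (hCd _))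
    _ ≤ (n + 1) ^ Nat.card ι * (C * (2 * (n + 1) ^ (W + 2)) ^ d) := by
        gcongr
        have := Nat.one_le_pow (W + 2) (n + 1) (by omega)
        omega
    _ = C * 2 ^ d * (n + 1) ^ (Nat.card ι + (W + 2) * d) := by
        rw [mul_pow, ← pow_mul, pow_add]
        ring

end Collection

theorem Subgroup.lowerCentralSeries_le_of_le_lowerCentralSeries_one {G : Type*} [Group G]
    {H K : Subgroup G} (hK : K ≤ H.lowerCentralSeries 1) :
    ∀ n, K.lowerCentralSeries n ≤ H.lowerCentralSeries (n + 1)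
  | 0 => hK
  | n + 1 => Subgroup.commutator_mono (lowerCentralSeries_le_of_le_lowerCentralSeries_one hK n)
      (hK.trans (H.lowerCentralSeries_le_self 1))

theorem hasPolynomialGrowth_of_lowerCentralSeries_eq_bot {G : Type*} [Group G] {c : ℕ}
    {H : Subgroup G} (hH : H.lowerCentralSeries c = ⊥) {S : Set G} (hSH : S ⊆ H)
    (hS : S.Finite) : HasPolynomialGrowth S := by
  induction c generalizing H S with
  | zero =>
    rw [Subgroup.lowerCentralSeries_zero] at hH
    subst hH
    have hS1 : insert 1 S = {1} :=
      (insert_subset (mem_singleton 1) (by simpa using hSH)).antisymm (by simp)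
    exact ⟨1, 0, fun n => by simp [hS1]⟩
  | succ c ih =>
    obtain ⟨k, f, -, rfl⟩ := hS.fin_param
    have hf : ∀ i, f i ∈ H := range_subset_iff.mp hSH
    have hW : iterComm f (c + 1) ⊆ {1} := by
      simpa only [hH, Subgroup.coe_bot] using iterComm_subset_lowerCentralSeries f hf (c + 1)
    have hK : (Subgroup.closure (iterComms f (c + 1))).lowerCentralSeries c = ⊥ :=
      eq_bot_iff.mpr (hH ▸ Subgroup.lowerCentralSeries_le_of_le_lowerCentralSeries_one
        ((Subgroup.closure_le _).mpr (iterComms_subset_lowerCentralSeries_one f hf _)) c)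
    exact (ih hK Subgroup.subset_closure (iterComms_finite f _)).range_of_iterComms hW

section FiniteIndex
variable {G : Type*} [Group G] {H : Subgroup G} {R S : Set G}

theorem insert_one_mul_subset (hRH : ∀ g, ∃ r ∈ R, r⁻¹ * g ∈ H) :
    insert 1 S * R ⊆ R * insert 1 (R⁻¹ * S * R ∩ H) := by
  rintro _ ⟨x, rfl | hx, r, hr, rfl⟩
  · exact ⟨r, hr, 1, mem_insert _ _, by simp⟩
  · obtain ⟨r', hr', hmem⟩ := hRH (x * r)
    refine ⟨r', hr', r'⁻¹ * (x * r), mem_insert_of_mem _ ⟨?_, hmem⟩, mul_inv_cancel_left _ _⟩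
    rw [← mul_assoc]
    exact mul_mem_mul (mul_mem_mul (inv_mem_inv.mpr hr') hx) hr

theorem insert_one_pow_subset_mul (hR : 1 ∈ R) (hRH : ∀ g, ∃ r ∈ R, r⁻¹ * g ∈ H) (n : ℕ) :
    insert 1 S ^ n ⊆ R * insert 1 (R⁻¹ * S * R ∩ H) ^ n := by
  induction n with
  | zero => simpa using hR
  | succ n ih =>
    calc insert 1 S ^ (n + 1) = insert 1 S * insert 1 S ^ n := pow_succ' _ _
      _ ⊆ insert 1 S * R * insert 1 (R⁻¹ * S * R ∩ H) ^ n := by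
        rw [mul_assoc]; exact mul_subset_mul_left ih
      _ ⊆ R * insert 1 (R⁻¹ * S * R ∩ H) * insert 1 (R⁻¹ * S * R ∩ H) ^ n :=
        mul_subset_mul_right (insert_one_mul_subset hRH)
      _ = R * insert 1 (R⁻¹ * S * R ∩ H) ^ (n + 1) := by rw [mul_assoc, ← pow_succ']

theorem hasPolynomialGrowth_of_finiteIndex (H : Subgroup G) [H.FiniteIndex]
    (hH : ∀ U ⊆ (H : Set G), U.Finite → HasPolynomialGrowth U) (hS : S.Finite) :
    HasPolynomialGrowth S := by
  set R : Set G := insert 1 (range fun q : G ⧸ H => q.out)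
  have hRfin : R.Finite := (finite_range _).insert 1
  have hRH : ∀ g, ∃ r ∈ R, r⁻¹ * g ∈ H := fun g =>
    ⟨(g : G ⧸ H).out, mem_insert_of_mem _ (mem_range_self _),
      QuotientGroup.eq.mp (QuotientGroup.out_eq' _)⟩
  have hUfin : (R⁻¹ * S * R ∩ H).Finite := ((hRfin.inv.mul hS).mul hRfin).inter_of_left _
  obtain ⟨C, d, hCd⟩ := hH _ inter_subset_right hUfin
  refine ⟨R.ncard * C, d, fun n => ?_⟩
  calc (insert 1 S ^ n).ncard ≤ (R * insert 1 (R⁻¹ * S * R ∩ H) ^ n).ncard :=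
        ncard_le_ncard (insert_one_pow_subset_mul (mem_insert _ _) hRH n)
          (hRfin.mul ((hUfin.insert 1).pow n))
    _ ≤ R.ncard * (insert 1 (R⁻¹ * S * R ∩ H) ^ n).ncard := ncard_mul_le _ _
    _ ≤ R.ncard * (C * (n + 1) ^ d) := Nat.mul_le_mul_left _ (hCd n)
    _ = R.ncard * C * (n + 1) ^ d := (mul_assoc _ _ _).symm

end FiniteIndex

theorem VirtuallyNilpotent.hasPolynomialGrowth {G : Type*} [Group G] (hG : VirtuallyNilpotent G)
    {S : Set G} (hS : S.Finite) : HasPolynomialGrowth S := by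
  obtain ⟨H, hH, hnil⟩ := hG
  obtain ⟨_, hc⟩ := (Subgroup.isNilpotent_iff_lowerCentralSeries H).mp hnil
  exact hasPolynomialGrowth_of_finiteIndex H
    (fun _ hU hUfin => hasPolynomialGrowth_of_lowerCentralSeries_eq_bot hc hU hUfin) hS

theorem setOf_wordLength_le_subset {G : Type*} [Group G] {S : Set G}
    (hS : Subgroup.closure S = ⊤) (n : ℕ) :
    {g | wordLength S g ≤ n} ⊆ insert 1 (S ∪ S⁻¹) ^ n := by
  intro g hg
  have hne : {m | ∃ L : List G, L.length = m ∧ (∀ x ∈ L, x ∈ S ∪ S⁻¹) ∧ L.prod = g}.Nonempty := by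
    have hg' : g ∈ Submonoid.closure (S ∪ S⁻¹) := by
      rw [← Subgroup.closure_toSubmonoid, hS]
      trivial
    obtain ⟨L, hL, rfl⟩ := Submonoid.exists_list_of_mem_closure hg'
    exact ⟨_, L, rfl, hL, rfl⟩
  obtain ⟨L, hL, hLS, rfl⟩ := Nat.sInf_mem hne
  exact mem_insert_one_pow_iff.mpr ⟨L, hL.trans_le hg, hLS, rfl⟩

/-- Wolf: every finitely generated virtually nilpotent group has polynomial
growth with respect to every finite generating set. -/
theorem virtuallyNilpotent_polynomial_growth (Γ : Type u) [Group Γ]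
    (hvn : VirtuallyNilpotent Γ)
    (S : Set Γ) (hS : S.Finite) (hgen : Subgroup.closure S = ⊤) :
    ∃ (C : ℝ) (d : ℕ), 0 < C ∧ ∀ n : ℕ, 1 ≤ n →
      (({g : Γ | wordLength S g ≤ n}.ncard : ℝ) ≤ C * (n : ℝ) ^ d) := by
  obtain ⟨C, d, hCd⟩ := hvn.hasPolynomialGrowth (hS.union hS.inv)
  refine ⟨C * 2 ^ d + 1, d, by positivity, fun n hn => ?_⟩
  have hball : {g : Γ | wordLength S g ≤ n}.ncard ≤ C * 2 ^ d * n ^ d :=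
    calc {g : Γ | wordLength S g ≤ n}.ncard ≤ (insert 1 (S ∪ S⁻¹) ^ n).ncard :=
          ncard_le_ncard (setOf_wordLength_le_subset hgen n) (((hS.union hS.inv).insert 1).pow n)
      _ ≤ C * (n + 1) ^ d := hCd n
      _ ≤ C * (2 * n) ^ d := by gcongr; omega
      _ = C * 2 ^ d * n ^ d := by ring
  calc ({g : Γ | wordLength S g ≤ n}.ncard : ℝ) ≤ C * 2 ^ d * n ^ d := by exact_mod_cast hball
    _ ≤ (C * 2 ^ d + 1) * n ^ d := by gcongr; linarith
end
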